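/- arXiv:2412.20629 — 10 statements merged into one kernel-verified Lean document; each statement's English description precedes it below -/
import Mathlib

section
/- For all t₁, t₂ ∈ [0,1] with t₁ < t₂, the total variation satisfies V_{t₁}^{t₂}(Γ̂) ≤ 2(φ(t₂) − φ(t₁)) + (Γ̂(t₂) − Γ̂(t₁)). -/
open Set MeasureTheory

/-- `Γ̂(t) = t - Γ(t)`. -/
def Ghat (Γ : ℝ → ℝ) : ℝ → ℝ := fun t => t - Γ t

/-- `Γ̃(t) = φ(t) - Γ(t)`. -/
def Gtil (φ Γ : ℝ → ℝ) : ℝ → ℝ := fun t => φ t - Γ t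

/-- The (signed) total variation `V_a^b(f)` of `f` on `[a, b] ⊆ [0, 1]`, with
the conventions `V_b^a(f) = -V_a^b(f)` and `V_a^a(f) = 0`. -/
noncomputable def sV (f : ℝ → ℝ) (a b : ℝ) : ℝ := variationOnFromTo f (Set.Icc 0 1) a b

/-- `f₁(x, y) = x - (1/2) (V_{φ⁻¹(y)}^x(Γ̂) + Γ̂(x) + Γ̂(φ⁻¹(y)))`, where `ψ = φ⁻¹`. -/
noncomputable def f1 (ψ Γ : ℝ → ℝ) (x y : ℝ) : ℝ :=
  x - (1/2) * (sV (Ghat Γ) (ψ y) x + Ghat Γ x + Ghat Γ (ψ y))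

/-- `f₂(x, y) = y - (1/2) (V_x^{φ⁻¹(y)}(Γ̃) + Γ̃(x) + Γ̃(φ⁻¹(y)))`, where `ψ = φ⁻¹`. -/
noncomputable def f2 (φ ψ Γ : ℝ → ℝ) (x y : ℝ) : ℝ :=
  y - (1/2) * (sV (Gtil φ Γ) x (ψ y) + Gtil φ Γ x + Gtil φ Γ (ψ y))

/-- `C₁(x, y) = min {x, y, f₁(x, y)}`. -/
noncomputable def C1 (ψ Γ : ℝ → ℝ) (x y : ℝ) : ℝ := min x (min y (f1 ψ Γ x y))

/-- `C₂(x, y) = min {x, y, f₂(x, y)}`. -/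
noncomputable def C2 (φ ψ Γ : ℝ → ℝ) (x y : ℝ) : ℝ := min x (min y (f2 φ ψ Γ x y))

/-- The φ-splice `C₂ ▵_φ C₁`: equal to `C₁` when `y ≤ φ(x)`, to `C₂` when `y ≥ φ(x)`. -/
noncomputable def splice (φ ψ Γ : ℝ → ℝ) (x y : ℝ) : ℝ :=
  if y ≤ φ x then C1 ψ Γ x y else C2 φ ψ Γ x y

/-- A copula on `[0,1]²`: boundary conditions and 2-increasingness. -/
def IsCopula (C : ℝ → ℝ → ℝ) : Prop :=
  (∀ x ∈ Set.Icc (0:ℝ) 1, ∀ y ∈ Set.Icc (0:ℝ) 1, C x y ∈ Set.Icc (0:ℝ) 1) ∧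
  (∀ x ∈ Set.Icc (0:ℝ) 1, C x 0 = 0 ∧ C 0 x = 0 ∧ C x 1 = x ∧ C 1 x = x) ∧
  (∀ x₁ x₂ y₁ y₂ : ℝ, x₁ ∈ Set.Icc (0:ℝ) 1 → x₂ ∈ Set.Icc (0:ℝ) 1 →
    y₁ ∈ Set.Icc (0:ℝ) 1 → y₂ ∈ Set.Icc (0:ℝ) 1 → x₁ ≤ x₂ → y₁ ≤ y₂ →
    0 ≤ C x₂ y₂ - C x₂ y₁ - C x₁ y₂ + C x₁ y₁)

/-- The greatest quasi-copula `A_Γ` with curvilinear section `Γ` (`ψ = φ⁻¹`). -/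
noncomputable def AG (φ ψ Γ : ℝ → ℝ) (x y : ℝ) : ℝ :=
  if y ≤ φ x then min y (x - sSup (Ghat Γ '' Set.Icc (ψ y) x))
  else min x (y - sSup (Gtil φ Γ '' Set.Icc x (ψ y)))

theorem stmt_3
    (φ Γ : ℝ → ℝ)
    (hφcont : ContinuousOn φ (Set.Icc 0 1))
    (hφmono : StrictMonoOn φ (Set.Icc 0 1))
    (hφ0 : φ 0 = 0) (hφ1 : φ 1 = 1)
    (hΓrange : ∀ t ∈ Set.Icc (0:ℝ) 1, max 0 (t + φ t - 1) ≤ Γ t ∧ Γ t ≤ min t (φ t))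
    (hΓlip : ∀ t₁ t₂ : ℝ, t₁ ∈ Set.Icc (0:ℝ) 1 → t₂ ∈ Set.Icc (0:ℝ) 1 → t₁ ≤ t₂ →
      0 ≤ Γ t₂ - Γ t₁ ∧ Γ t₂ - Γ t₁ ≤ (t₂ - t₁) + (φ t₂ - φ t₁)) :
    ∀ t₁ ∈ Set.Icc (0:ℝ) 1, ∀ t₂ ∈ Set.Icc (0:ℝ) 1, t₁ < t₂ →
      sV (Ghat Γ) t₁ t₂ ≤ 2 * (φ t₂ - φ t₁) + (Ghat Γ t₂ - Ghat Γ t₁) := by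
  intro t₁ ht₁ t₂ ht₂ h12
  set g : ℝ → ℝ := fun t => Ghat Γ t + 2 * φ t with hg
  -- key pointwise estimate
  have key : ∀ a ∈ Set.Icc (0:ℝ) 1, ∀ b ∈ Set.Icc (0:ℝ) 1, a ≤ b →
      |Ghat Γ b - Ghat Γ a| ≤ g b - g a := by
    intro a ha b hb hab
    obtain ⟨h1, h2⟩ := hΓlip a b ha hb hab
    have hφ : φ a ≤ φ b := hφmono.monotoneOn ha hb hab
    simp only [hg, Ghat, abs_le, abs_sub_le_iff]
    constructor <;> [skip; skip] <;> nlinarith [abs_nonneg (Ghat Γ b - Ghat Γ a)]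
  have gmono : ∀ a ∈ Set.Icc (0:ℝ) 1, ∀ b ∈ Set.Icc (0:ℝ) 1, a ≤ b → g a ≤ g b := by
    intro a ha b hb hab
    have := key a ha b hb hab
    have := abs_nonneg (Ghat Γ b - Ghat Γ a)
    linarith
  have hbound : 2 * (φ t₂ - φ t₁) + (Ghat Γ t₂ - Ghat Γ t₁) = g t₂ - g t₁ := by
    simp only [hg]; ring
  have hb0 : 0 ≤ g t₂ - g t₁ := by
    have := gmono t₁ ht₁ t₂ ht₂ h12.le; linarith
  rw [hbound]
  have hEv : eVariationOn (Ghat Γ) (Set.Icc 0 1 ∩ Set.Icc t₁ t₂)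
      ≤ ENNReal.ofReal (g t₂ - g t₁) := by
    apply iSup_le _
    rintro ⟨n, ⟨u, hu, us⟩⟩
    have hus : ∀ i, u i ∈ Set.Icc (0:ℝ) 1 := fun i => (us i).1
    calc
      (∑ i ∈ Finset.range n, edist (Ghat Γ (u (i + 1))) (Ghat Γ (u i)))
          ≤ ∑ i ∈ Finset.range n, ENNReal.ofReal (g (u (i + 1)) - g (u i)) := by
        refine Finset.sum_le_sum fun i _ => ?_
        rw [edist_dist, Real.dist_eq]
        exact ENNReal.ofReal_le_ofReal
          (key (u i) (hus i) (u (i + 1)) (hus (i + 1)) (hu (Nat.le_succ _)))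
      _ = ENNReal.ofReal (∑ i ∈ Finset.range n, (g (u (i + 1)) - g (u i))) := by
        rw [ENNReal.ofReal_sum_of_nonneg]
        intro i _
        have := gmono (u i) (hus i) (u (i + 1)) (hus (i + 1)) (hu (Nat.le_succ _))
        linarith
      _ = ENNReal.ofReal (g (u n) - g (u 0)) := by
        rw [Finset.sum_range_sub fun i => g (u i)]
      _ ≤ ENNReal.ofReal (g t₂ - g t₁) := by
        apply ENNReal.ofReal_le_ofReal
        have h1 := gmono (u n) (hus n) t₂ ht₂ (us n).2.2
        have h2 := gmono t₁ ht₁ (u 0) (hus 0) (us 0).2.1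
        linarith
  rw [sV, variationOnFromTo.eq_of_le _ _ h12.le]
  exact ENNReal.toReal_le_of_le_ofReal hb0 hEv
end

section
/- For all t₁, t₂ ∈ [0,1] with t₁ < t₂, the total variation satisfies V_{t₁}^{t₂}(Γ̃) ≤ 2(t₂ − t₁) + (Γ̃(t₂) − Γ̃(t₁)). -/
open Set MeasureTheory

theorem evar_le_aux {f g : ℝ → ℝ} {s : Set ℝ}
    (h : ∀ x ∈ s, ∀ y ∈ s, x ≤ y → |f y - f x| ≤ g y - g x) {a b : ℝ}
    (as : a ∈ s) (bs : b ∈ s) :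
    eVariationOn f (s ∩ Set.Icc a b) ≤ ENNReal.ofReal (g b - g a) := by
  apply iSup_le _
  rintro ⟨n, ⟨u, hu, us⟩⟩
  have key : ∀ i, edist (f (u (i+1))) (f (u i)) ≤ ENNReal.ofReal (g (u (i+1)) - g (u i)) := by
    intro i
    rw [edist_dist, Real.dist_eq]
    exact ENNReal.ofReal_le_ofReal (h _ (us i).1 _ (us (i+1)).1 (hu (Nat.le_succ _)))
  calc (∑ i ∈ Finset.range n, edist (f (u (i + 1))) (f (u i)))
      ≤ ∑ i ∈ Finset.range n, ENNReal.ofReal (g (u (i+1)) - g (u i)) :=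
        Finset.sum_le_sum fun i _ => key i
    _ = ENNReal.ofReal (∑ i ∈ Finset.range n, (g (u (i + 1)) - g (u i))) := by
        rw [ENNReal.ofReal_sum_of_nonneg]
        intro i _
        have := h _ (us i).1 _ (us (i+1)).1 (hu (Nat.le_succ _))
        have := abs_nonneg (f (u (i+1)) - f (u i))
        linarith
    _ = ENNReal.ofReal (g (u n) - g (u 0)) := by rw [Finset.sum_range_sub fun i => g (u i)]
    _ ≤ ENNReal.ofReal (g b - g a) := by
        apply ENNReal.ofReal_le_ofReal
        have h1 := h _ (us n).1 _ bs (us n).2.2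
        have h2 := h _ as _ (us 0).1 (us 0).2.1
        have := abs_nonneg (f b - f (u n))
        have := abs_nonneg (f (u 0) - f a)
        linarith

theorem stmt_4
    (φ Γ : ℝ → ℝ)
    (hφcont : ContinuousOn φ (Set.Icc 0 1))
    (hφmono : StrictMonoOn φ (Set.Icc 0 1))
    (hφ0 : φ 0 = 0) (hφ1 : φ 1 = 1)
    (hΓrange : ∀ t ∈ Set.Icc (0:ℝ) 1, max 0 (t + φ t - 1) ≤ Γ t ∧ Γ t ≤ min t (φ t))
    (hΓlip : ∀ t₁ t₂ : ℝ, t₁ ∈ Set.Icc (0:ℝ) 1 → t₂ ∈ Set.Icc (0:ℝ) 1 → t₁ ≤ t₂ →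
      0 ≤ Γ t₂ - Γ t₁ ∧ Γ t₂ - Γ t₁ ≤ (t₂ - t₁) + (φ t₂ - φ t₁)) :
    ∀ t₁ ∈ Set.Icc (0:ℝ) 1, ∀ t₂ ∈ Set.Icc (0:ℝ) 1, t₁ < t₂ →
      sV (Gtil φ Γ) t₁ t₂ ≤ 2 * (t₂ - t₁) + (Gtil φ Γ t₂ - Gtil φ Γ t₁) := by
  intro t₁ ht₁ t₂ ht₂ hlt
  have h : ∀ x ∈ Set.Icc (0:ℝ) 1, ∀ y ∈ Set.Icc (0:ℝ) 1, x ≤ y →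
      |Gtil φ Γ y - Gtil φ Γ x| ≤
        (Gtil φ Γ y + 2*y) - (Gtil φ Γ x + 2*x) := by
    intro x hx y hy hxy
    have hΓ := hΓlip x y hx hy hxy
    have hφle : φ x ≤ φ y := hφmono.monotoneOn hx hy hxy
    simp only [Gtil]
    rw [abs_le]
    constructor <;> linarith [hΓ.1, hΓ.2]
  have key := evar_le_aux (g := fun t => Gtil φ Γ t + 2*t) h ht₁ ht₂
  rw [sV, variationOnFromTo.eq_of_le _ _ hlt.le]
  have hr : 0 ≤ 2 * (t₂ - t₁) + (Gtil φ Γ t₂ - Gtil φ Γ t₁) := by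
    have hΓ := hΓlip t₁ t₂ ht₁ ht₂ hlt.le
    have hφle : φ t₁ ≤ φ t₂ := hφmono.monotoneOn ht₁ ht₂ hlt.le
    simp only [Gtil]
    linarith [hΓ.2]
  refine ENNReal.toReal_le_of_le_ofReal hr ?_
  convert key using 2
  ring
end

section
/- For all t₁, t₂ ∈ [0,1] with t₁ < t₂, the total variations satisfy V_{t₁}^{t₂}(Γ̂) + V_{t₁}^{t₂}(Γ̃) ≤ (t₂ − t₁) + (φ(t₂) − φ(t₁)). -/
open Set MeasureTheory
open scoped ENNReal

lemma keyA (f g D : ℝ → ℝ) {a b x y : ℝ} (hx : x ∈ Icc a b) (hy : y ∈ Icc a b) (hxy : x ≤ y)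
    (h : ∀ p ∈ Icc a b, ∀ q ∈ Icc a b, p ≤ q → |f q - f p| + |g q - g p| ≤ D q - D p) :
    edist (f x) (f y) + eVariationOn g (Icc a b ∩ Icc x y) ≤ ENNReal.ofReal (D y - D x) := by
  have hxs : x ∈ Icc a b ∩ Icc x y := ⟨hx, le_refl x, hxy⟩
  haveI : Nonempty { u : ℕ → ℝ // Monotone u ∧ ∀ i, u i ∈ Icc a b ∩ Icc x y } :=
    eVariationOn.nonempty_monotone_mem ⟨x, hxs⟩
  rw [eVariationOn, ENNReal.add_iSup]
  refine iSup_le ?_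
  rintro ⟨n, u, hu, us⟩
  dsimp only
  set v : ℕ → ℝ := fun i => if i = 0 then x else if i ≤ n + 1 then u (i - 1) else y with hvdef
  have hv0 : v 0 = x := by simp [hvdef]
  have hvlast : v (n + 2) = y := by
    simp only [hvdef]
    rw [if_neg (by omega), if_neg (by omega)]
  have hvu : ∀ i ≤ n, v (i + 1) = u i := by
    intro i hi
    simp only [hvdef]
    rw [if_neg (by omega), if_pos (by omega)]
    simp
  have hvmem : ∀ i, v i ∈ Icc a b := by
    intro i
    simp only [hvdef]
    split_ifs with h1 h2
    · exact hx
    · exact (us _).1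
    · exact hy
  have hvmono : Monotone v := by
    apply monotone_nat_of_le_succ
    intro i
    by_cases h0 : i = 0
    · subst h0
      rw [hv0, hvu 0 (Nat.zero_le n)]
      exact (us 0).2.1
    · by_cases h1 : i ≤ n
      · obtain ⟨j, rfl⟩ : ∃ j, i = j + 1 := ⟨i - 1, by omega⟩
        rw [hvu j (by omega), show j + 1 + 1 = (j + 1) + 1 from rfl, hvu (j + 1) h1]
        exact hu (Nat.le_succ j)
      · by_cases h2 : i = n + 1
        · subst h2
          rw [hvu n le_rfl, show n + 1 + 1 = n + 2 from rfl, hvlast]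
          exact (us n).2.2
        · have e1 : v i = y := by
            simp only [hvdef]; rw [if_neg h0, if_neg (by omega)]
          have e2 : v (i + 1) = y := by
            simp only [hvdef]; rw [if_neg (by omega), if_neg (by omega)]
          rw [e1, e2]
  have step : ∀ i ∈ Finset.range (n + 2),
      edist (f (v (i + 1))) (f (v i)) + edist (g (v (i + 1))) (g (v i)) ≤
        ENNReal.ofReal (D (v (i + 1)) - D (v i)) := by
    intro i _
    have hh := h _ (hvmem i) _ (hvmem (i + 1)) (hvmono (Nat.le_succ i))
    rw [edist_dist, edist_dist, Real.dist_eq, Real.dist_eq,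
      ← ENNReal.ofReal_add (abs_nonneg _) (abs_nonneg _)]
    exact ENNReal.ofReal_le_ofReal hh
  have hf1 : edist (f x) (f y) ≤ ∑ i ∈ Finset.range (n + 2), edist (f (v (i + 1))) (f (v i)) := by
    have := edist_le_range_sum_edist (fun i => f (v i)) (n + 2)
    simp only [hv0, hvlast] at this
    simpa [edist_comm] using this
  have hg1 : (∑ i ∈ Finset.range n, edist (g (u (i + 1))) (g (u i))) ≤
      ∑ i ∈ Finset.range (n + 2), edist (g (v (i + 1))) (g (v i)) := by
    set T : ℕ → ℝ≥0∞ := fun i => edist (g (v (i + 1))) (g (v i)) with hT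
    calc (∑ i ∈ Finset.range n, edist (g (u (i + 1))) (g (u i)))
        = ∑ i ∈ Finset.range n, T (i + 1) := by
          refine Finset.sum_congr rfl fun i hi => ?_
          have hi' := Finset.mem_range.1 hi
          simp only [hT]
          rw [show i + 1 + 1 = (i + 1) + 1 from rfl, hvu (i + 1) (by omega), hvu i (by omega)]
      _ ≤ ∑ i ∈ Finset.range (n + 1), T (i + 1) :=
          Finset.sum_le_sum_of_subset (Finset.range_subset_range.2 (Nat.le_succ n))
      _ ≤ (∑ i ∈ Finset.range (n + 1), T (i + 1)) + T 0 := le_self_add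
      _ = ∑ i ∈ Finset.range (n + 2), T i := (Finset.sum_range_succ' T (n + 1)).symm
  calc edist (f x) (f y) + ∑ i ∈ Finset.range n, edist (g (u (i + 1))) (g (u i))
      ≤ (∑ i ∈ Finset.range (n + 2), edist (f (v (i + 1))) (f (v i))) +
        ∑ i ∈ Finset.range (n + 2), edist (g (v (i + 1))) (g (v i)) := add_le_add hf1 hg1
    _ = ∑ i ∈ Finset.range (n + 2),
        (edist (f (v (i + 1))) (f (v i)) + edist (g (v (i + 1))) (g (v i))) :=
          Finset.sum_add_distrib.symm
    _ ≤ ∑ i ∈ Finset.range (n + 2), ENNReal.ofReal (D (v (i + 1)) - D (v i)) :=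
          Finset.sum_le_sum step
    _ = ENNReal.ofReal (∑ i ∈ Finset.range (n + 2), (D (v (i + 1)) - D (v i))) := by
          rw [ENNReal.ofReal_sum_of_nonneg]
          intro i _
          have hh := h _ (hvmem i) _ (hvmem (i + 1)) (hvmono (Nat.le_succ i))
          have : (0:ℝ) ≤ |f (v (i+1)) - f (v i)| + |g (v (i+1)) - g (v i)| := by positivity
          linarith
    _ = ENNReal.ofReal (D y - D x) := by
          rw [Finset.sum_range_sub (fun i => D (v i)), hvlast, hv0]

lemma keyMain (f g D : ℝ → ℝ) {a b : ℝ} (hab : a ≤ b)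
    (h : ∀ p ∈ Icc a b, ∀ q ∈ Icc a b, p ≤ q → |f q - f p| + |g q - g p| ≤ D q - D p) :
    eVariationOn f (Icc a b) + eVariationOn g (Icc a b) ≤ ENNReal.ofReal (D b - D a) := by
  have hDnn : ∀ p ∈ Icc a b, ∀ q ∈ Icc a b, p ≤ q → (0:ℝ) ≤ D q - D p := by
    intro p hp q hq hpq
    have := h p hp q hq hpq
    have h2 : (0:ℝ) ≤ |f q - f p| + |g q - g p| := by positivity
    linarith
  haveI : Nonempty { u : ℕ → ℝ // Monotone u ∧ ∀ i, u i ∈ Icc a b } :=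
    eVariationOn.nonempty_monotone_mem ⟨a, le_refl a, hab⟩
  rw [eVariationOn, ENNReal.iSup_add]
  refine iSup_le ?_
  rintro ⟨n, u, hu, us⟩
  dsimp only
  -- induction claim
  have claim : ∀ m : ℕ, (∑ i ∈ Finset.range m, edist (f (u (i + 1))) (f (u i))) +
      eVariationOn g (Icc a b ∩ Icc a (u m)) ≤ ENNReal.ofReal (D (u m) - D a) := by
    intro m
    induction m with
    | zero =>
        simp only [Finset.range_zero, Finset.sum_empty, zero_add]
        have := keyA f g D (left_mem_Icc.2 hab) (us 0) (us 0).1 h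
        exact le_trans le_add_self this
    | succ m ih =>
        rw [Finset.sum_range_succ]
        have hsplit := eVariationOn.Icc_add_Icc g (us m).1 (hu (Nat.le_succ m)) (us m)
        rw [← hsplit]
        have hA := keyA f g D (us m) (us (m + 1)) (hu (Nat.le_succ m)) h
        calc (∑ i ∈ Finset.range m, edist (f (u (i + 1))) (f (u i))) +
              edist (f (u (m + 1))) (f (u m)) +
              (eVariationOn g (Icc a b ∩ Icc a (u m)) +
                eVariationOn g (Icc a b ∩ Icc (u m) (u (m + 1))))
            = ((∑ i ∈ Finset.range m, edist (f (u (i + 1))) (f (u i))) +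
                eVariationOn g (Icc a b ∩ Icc a (u m))) +
              (edist (f (u m)) (f (u (m + 1))) +
                eVariationOn g (Icc a b ∩ Icc (u m) (u (m + 1)))) := by
              rw [edist_comm]; ring
          _ ≤ ENNReal.ofReal (D (u m) - D a) + ENNReal.ofReal (D (u (m + 1)) - D (u m)) :=
              add_le_add ih hA
          _ = ENNReal.ofReal (D (u (m + 1)) - D a) := by
              rw [← ENNReal.ofReal_add (hDnn _ (left_mem_Icc.2 hab) _ (us m) (us m).1)
                (hDnn _ (us m) _ (us (m + 1)) (hu (Nat.le_succ m)))]
              congr 1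
              ring
  have hsplit2 := eVariationOn.Icc_add_Icc g (us n).1 (us n).2 (us n)
  have hIcc : Icc a b ∩ Icc a b = Icc a b := Set.inter_self _
  rw [hIcc] at hsplit2
  rw [← hsplit2]
  have hA := keyA f g D (us n) (right_mem_Icc.2 hab) (us n).2 h
  calc (∑ i ∈ Finset.range n, edist (f (u (i + 1))) (f (u i))) +
        (eVariationOn g (Icc a b ∩ Icc a (u n)) + eVariationOn g (Icc a b ∩ Icc (u n) b))
      ≤ ((∑ i ∈ Finset.range n, edist (f (u (i + 1))) (f (u i))) +
          eVariationOn g (Icc a b ∩ Icc a (u n))) +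
        (edist (f (u n)) (f b) + eVariationOn g (Icc a b ∩ Icc (u n) b)) := by
        rw [← add_assoc]
        exact add_le_add le_rfl le_add_self
    _ ≤ ENNReal.ofReal (D (u n) - D a) + ENNReal.ofReal (D b - D (u n)) :=
        add_le_add (claim n) hA
    _ = ENNReal.ofReal (D b - D a) := by
        rw [← ENNReal.ofReal_add (hDnn _ (left_mem_Icc.2 hab) _ (us n) (us n).1)
          (hDnn _ (us n) _ (right_mem_Icc.2 hab) (us n).2)]
        congr 1
        ring

theorem stmt_5
    (φ Γ : ℝ → ℝ)
    (hφcont : ContinuousOn φ (Set.Icc 0 1))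
    (hφmono : StrictMonoOn φ (Set.Icc 0 1))
    (hφ0 : φ 0 = 0) (hφ1 : φ 1 = 1)
    (hΓrange : ∀ t ∈ Set.Icc (0:ℝ) 1, max 0 (t + φ t - 1) ≤ Γ t ∧ Γ t ≤ min t (φ t))
    (hΓlip : ∀ t₁ t₂ : ℝ, t₁ ∈ Set.Icc (0:ℝ) 1 → t₂ ∈ Set.Icc (0:ℝ) 1 → t₁ ≤ t₂ →
      0 ≤ Γ t₂ - Γ t₁ ∧ Γ t₂ - Γ t₁ ≤ (t₂ - t₁) + (φ t₂ - φ t₁)) :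
    ∀ t₁ ∈ Set.Icc (0:ℝ) 1, ∀ t₂ ∈ Set.Icc (0:ℝ) 1, t₁ < t₂ →
      sV (Ghat Γ) t₁ t₂ + sV (Gtil φ Γ) t₁ t₂ ≤ (t₂ - t₁) + (φ t₂ - φ t₁) := by
  intro t₁ ht₁ t₂ ht₂ hlt
  have hsub : Icc t₁ t₂ ⊆ Icc (0:ℝ) 1 := Icc_subset_Icc ht₁.1 ht₂.2
  have h : ∀ p ∈ Icc t₁ t₂, ∀ q ∈ Icc t₁ t₂, p ≤ q →
      |Ghat Γ q - Ghat Γ p| + |Gtil φ Γ q - Gtil φ Γ p| ≤ (q + φ q) - (p + φ p) := by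
    intro p hp q hq hpq
    have hp' := hsub hp
    have hq' := hsub hq
    obtain ⟨h1, h2⟩ := hΓlip p q hp' hq' hpq
    have hφle : φ p ≤ φ q := hφmono.monotoneOn hp' hq' hpq
    simp only [Ghat, Gtil]
    rcases abs_cases (q - Γ q - (p - Γ p)) with ⟨e1, _⟩ | ⟨e1, _⟩ <;>
      rcases abs_cases (φ q - Γ q - (φ p - Γ p)) with ⟨e2, _⟩ | ⟨e2, _⟩ <;> linarith
  have key := keyMain (Ghat Γ) (Gtil φ Γ) (fun t => t + φ t) hlt.le h
  have hIcc : Icc (0:ℝ) 1 ∩ Icc t₁ t₂ = Icc t₁ t₂ := inter_eq_self_of_subset_right hsub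
  rw [sV, sV, variationOnFromTo.eq_of_le _ _ hlt.le, variationOnFromTo.eq_of_le _ _ hlt.le, hIcc]
  set A := eVariationOn (Ghat Γ) (Icc t₁ t₂) with hA
  set B := eVariationOn (Gtil φ Γ) (Icc t₁ t₂) with hB
  have hfin : A + B ≠ ⊤ := ne_top_of_le_ne_top ENNReal.ofReal_ne_top key
  have hAfin : A ≠ ⊤ := fun hc => hfin (by simp [hc])
  have hBfin : B ≠ ⊤ := fun hc => hfin (by simp [hc])
  rw [← ENNReal.toReal_add hAfin hBfin]
  have : (t₂ + φ t₂) - (t₁ + φ t₁) = (t₂ - t₁) + (φ t₂ - φ t₁) := by ring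
  rw [← this]
  exact ENNReal.toReal_le_of_le_ofReal
    (by have := hφmono.monotoneOn ht₁ ht₂ hlt.le; linarith) key
end

section
/- The functions f₁ and f₂ are increasing in each variable on [0,1]²; that is, for i = 1, 2, x₁ ≤ x₂ implies fᵢ(x₁, y) ≤ fᵢ(x₂, y) and y₁ ≤ y₂ implies fᵢ(x, y₁) ≤ fᵢ(x, y₂). -/
open Set MeasureTheory

/-- If increments of `f` are dominated by increments of `M` on `s`, the variation of `f`
on `s ∩ [a,b]` is bounded by `M b - M a`. -/
lemma evar_le_of_bound {f M : ℝ → ℝ} {s : Set ℝ}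
    (hbd : ∀ x ∈ s, ∀ y ∈ s, x ≤ y → |f y - f x| ≤ M y - M x)
    {a b : ℝ} (as : a ∈ s) (bs : b ∈ s) (hab : a ≤ b) :
    eVariationOn f (s ∩ Set.Icc a b) ≤ ENNReal.ofReal (M b - M a) := by
  have hM : ∀ x ∈ s, ∀ y ∈ s, x ≤ y → M x ≤ M y := fun x hx y hy hxy =>
    sub_nonneg.mp ((abs_nonneg _).trans (hbd x hx y hy hxy))
  apply iSup_le
  rintro ⟨n, ⟨u, hu, us⟩⟩
  calc
    (∑ i ∈ Finset.range n, edist (f (u (i + 1))) (f (u i))) ≤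
        ∑ i ∈ Finset.range n, ENNReal.ofReal (M (u (i + 1)) - M (u i)) := by
      refine Finset.sum_le_sum fun i _ => ?_
      rw [edist_dist, Real.dist_eq]
      exact ENNReal.ofReal_le_ofReal
        (hbd _ (us i).1 _ (us (i + 1)).1 (hu (Nat.le_succ _)))
    _ = ENNReal.ofReal (∑ i ∈ Finset.range n, (M (u (i + 1)) - M (u i))) := by
      rw [ENNReal.ofReal_sum_of_nonneg]
      exact fun i _ => sub_nonneg.mpr (hM _ (us i).1 _ (us (i + 1)).1 (hu (Nat.le_succ _)))
    _ = ENNReal.ofReal (M (u n) - M (u 0)) := by rw [Finset.sum_range_sub fun i => M (u i)]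
    _ ≤ ENNReal.ofReal (M b - M a) :=
      ENNReal.ofReal_le_ofReal
        (sub_le_sub (hM _ (us n).1 b bs (us n).2.2) (hM a as _ (us 0).1 (us 0).2.1))

lemma lbv_of_bound {f M : ℝ → ℝ} {s : Set ℝ}
    (hbd : ∀ x ∈ s, ∀ y ∈ s, x ≤ y → |f y - f x| ≤ M y - M x) :
    LocallyBoundedVariationOn f s := by
  intro a b ha hb
  rcases le_total a b with h | h
  · exact ((evar_le_of_bound hbd ha hb h).trans_lt ENNReal.ofReal_lt_top).ne
  · have : s ∩ Set.Icc a b ⊆ s ∩ Set.Icc b a := by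
      intro x hx; exact ⟨hx.1, h.trans hx.2.1, hx.2.2.trans h⟩
    exact (((eVariationOn.mono f this).trans
      (evar_le_of_bound hbd hb ha h)).trans_lt ENNReal.ofReal_lt_top).ne

lemma var_le_of_bound {f M : ℝ → ℝ} {s : Set ℝ}
    (hbd : ∀ x ∈ s, ∀ y ∈ s, x ≤ y → |f y - f x| ≤ M y - M x)
    {a b : ℝ} (as : a ∈ s) (bs : b ∈ s) (hab : a ≤ b) :
    variationOnFromTo f s a b ≤ M b - M a := by
  rw [variationOnFromTo.eq_of_le f s hab]
  have h0 : (0:ℝ) ≤ M b - M a := (abs_nonneg _).trans (hbd a as b bs hab)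
  calc (eVariationOn f (s ∩ Set.Icc a b)).toReal
      ≤ (ENNReal.ofReal (M b - M a)).toReal :=
        ENNReal.toReal_mono ENNReal.ofReal_ne_top (evar_le_of_bound hbd as bs hab)
    _ = M b - M a := ENNReal.toReal_ofReal h0

lemma sub_le_var_of_bound {f M : ℝ → ℝ} {s : Set ℝ}
    (hbd : ∀ x ∈ s, ∀ y ∈ s, x ≤ y → |f y - f x| ≤ M y - M x)
    {a b : ℝ} (as : a ∈ s) (bs : b ∈ s) (hab : a ≤ b) :
    f b - f a ≤ variationOnFromTo f s a b := by
  rw [variationOnFromTo.eq_of_le f s hab]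
  exact BoundedVariationOn.sub_le (lbv_of_bound hbd a b as bs)
    ⟨bs, hab, le_rfl⟩ ⟨as, le_rfl, hab⟩

theorem stmt_6
    (φ Γ : ℝ → ℝ)
    (hφcont : ContinuousOn φ (Set.Icc 0 1))
    (hφmono : StrictMonoOn φ (Set.Icc 0 1))
    (hφ0 : φ 0 = 0) (hφ1 : φ 1 = 1)
    (hΓrange : ∀ t ∈ Set.Icc (0:ℝ) 1, max 0 (t + φ t - 1) ≤ Γ t ∧ Γ t ≤ min t (φ t))
    (hΓlip : ∀ t₁ t₂ : ℝ, t₁ ∈ Set.Icc (0:ℝ) 1 → t₂ ∈ Set.Icc (0:ℝ) 1 → t₁ ≤ t₂ →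
      0 ≤ Γ t₂ - Γ t₁ ∧ Γ t₂ - Γ t₁ ≤ (t₂ - t₁) + (φ t₂ - φ t₁))
    (ψ : ℝ → ℝ)
    (hψmem : ∀ y ∈ Set.Icc (0:ℝ) 1, ψ y ∈ Set.Icc (0:ℝ) 1)
    (hψφ : ∀ t ∈ Set.Icc (0:ℝ) 1, ψ (φ t) = t)
    (hφψ : ∀ y ∈ Set.Icc (0:ℝ) 1, φ (ψ y) = y) :
    (∀ x₁ ∈ Set.Icc (0:ℝ) 1, ∀ x₂ ∈ Set.Icc (0:ℝ) 1, ∀ y ∈ Set.Icc (0:ℝ) 1, x₁ ≤ x₂ →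
      f1 ψ Γ x₁ y ≤ f1 ψ Γ x₂ y) ∧
    (∀ x ∈ Set.Icc (0:ℝ) 1, ∀ y₁ ∈ Set.Icc (0:ℝ) 1, ∀ y₂ ∈ Set.Icc (0:ℝ) 1, y₁ ≤ y₂ →
      f1 ψ Γ x y₁ ≤ f1 ψ Γ x y₂) ∧
    (∀ x₁ ∈ Set.Icc (0:ℝ) 1, ∀ x₂ ∈ Set.Icc (0:ℝ) 1, ∀ y ∈ Set.Icc (0:ℝ) 1, x₁ ≤ x₂ →
      f2 φ ψ Γ x₁ y ≤ f2 φ ψ Γ x₂ y) ∧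
    (∀ x ∈ Set.Icc (0:ℝ) 1, ∀ y₁ ∈ Set.Icc (0:ℝ) 1, ∀ y₂ ∈ Set.Icc (0:ℝ) 1, y₁ ≤ y₂ →
      f2 φ ψ Γ x y₁ ≤ f2 φ ψ Γ x y₂) := by
  set s := Set.Icc (0:ℝ) 1 with hs
  -- increment bound for Γ̂ by M1 = id + Γ
  have hbd1 : ∀ x ∈ s, ∀ y ∈ s, x ≤ y →
      |Ghat Γ y - Ghat Γ x| ≤ (y + Γ y) - (x + Γ x) := by
    intro x hx y hy hxy
    have h := hΓlip x y hx hy hxy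
    rw [abs_le]; unfold Ghat; constructor <;> linarith [h.1]
  -- increment bound for Γ̃ by M2 = φ + Γ
  have hbd2 : ∀ x ∈ s, ∀ y ∈ s, x ≤ y →
      |Gtil φ Γ y - Gtil φ Γ x| ≤ (φ y + Γ y) - (φ x + Γ x) := by
    intro x hx y hy hxy
    have h := hΓlip x y hx hy hxy
    have hφ : φ x ≤ φ y := hφmono.monotoneOn hx hy hxy
    rw [abs_le]; unfold Gtil; constructor <;> linarith [h.1]
  have hlbv1 : LocallyBoundedVariationOn (Ghat Γ) s := lbv_of_bound hbd1
  have hlbv2 : LocallyBoundedVariationOn (Gtil φ Γ) s := lbv_of_bound hbd2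
  -- ψ is monotone
  have hψmono : ∀ y₁ ∈ s, ∀ y₂ ∈ s, y₁ ≤ y₂ → ψ y₁ ≤ ψ y₂ := by
    intro y₁ hy₁ y₂ hy₂ h
    by_contra hc
    push_neg at hc
    have := hφmono (hψmem y₂ hy₂) (hψmem y₁ hy₁) hc
    rw [hφψ y₁ hy₁, hφψ y₂ hy₂] at this
    exact absurd h (not_le.mpr this)
  refine ⟨?_, ?_, ?_, ?_⟩
  · -- f1 increasing in x
    intro x₁ hx₁ x₂ hx₂ y hy hle
    have ha : ψ y ∈ s := hψmem y hy
    have hadd : variationOnFromTo (Ghat Γ) s (ψ y) x₁ +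
        variationOnFromTo (Ghat Γ) s x₁ x₂ = variationOnFromTo (Ghat Γ) s (ψ y) x₂ :=
      variationOnFromTo.add hlbv1 ha hx₁ hx₂
    have hvar : variationOnFromTo (Ghat Γ) s x₁ x₂ ≤ (x₂ + Γ x₂) - (x₁ + Γ x₁) :=
      var_le_of_bound hbd1 hx₁ hx₂ hle
    have hΓ := (hΓlip x₁ x₂ hx₁ hx₂ hle).1
    simp only [f1, sV, Ghat, ← hs]
    linarith
  · -- f1 increasing in y
    intro x hx y₁ hy₁ y₂ hy₂ hle
    have ha : ψ y₁ ∈ s := hψmem y₁ hy₁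
    have hb : ψ y₂ ∈ s := hψmem y₂ hy₂
    have hab : ψ y₁ ≤ ψ y₂ := hψmono y₁ hy₁ y₂ hy₂ hle
    have hadd : variationOnFromTo (Ghat Γ) s (ψ y₁) (ψ y₂) +
        variationOnFromTo (Ghat Γ) s (ψ y₂) x = variationOnFromTo (Ghat Γ) s (ψ y₁) x :=
      variationOnFromTo.add hlbv1 ha hb hx
    have hsub : Ghat Γ (ψ y₂) - Ghat Γ (ψ y₁) ≤
        variationOnFromTo (Ghat Γ) s (ψ y₁) (ψ y₂) := sub_le_var_of_bound hbd1 ha hb hab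
    simp only [f1, sV, ← hs]
    linarith
  · -- f2 increasing in x
    intro x₁ hx₁ x₂ hx₂ y hy hle
    have hb : ψ y ∈ s := hψmem y hy
    have hadd : variationOnFromTo (Gtil φ Γ) s x₁ x₂ +
        variationOnFromTo (Gtil φ Γ) s x₂ (ψ y) = variationOnFromTo (Gtil φ Γ) s x₁ (ψ y) :=
      variationOnFromTo.add hlbv2 hx₁ hx₂ hb
    have hsub : Gtil φ Γ x₂ - Gtil φ Γ x₁ ≤
        variationOnFromTo (Gtil φ Γ) s x₁ x₂ := sub_le_var_of_bound hbd2 hx₁ hx₂ hle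
    simp only [f2, sV, ← hs]
    linarith
  · -- f2 increasing in y
    intro x hx y₁ hy₁ y₂ hy₂ hle
    have ha : ψ y₁ ∈ s := hψmem y₁ hy₁
    have hb : ψ y₂ ∈ s := hψmem y₂ hy₂
    have hab : ψ y₁ ≤ ψ y₂ := hψmono y₁ hy₁ y₂ hy₂ hle
    have hadd : variationOnFromTo (Gtil φ Γ) s x (ψ y₁) +
        variationOnFromTo (Gtil φ Γ) s (ψ y₁) (ψ y₂) = variationOnFromTo (Gtil φ Γ) s x (ψ y₂) :=
      variationOnFromTo.add hlbv2 hx ha hb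
    have hvar : variationOnFromTo (Gtil φ Γ) s (ψ y₁) (ψ y₂) ≤
        (φ (ψ y₂) + Γ (ψ y₂)) - (φ (ψ y₁) + Γ (ψ y₁)) := var_le_of_bound hbd2 ha hb hab
    have hΓ := (hΓlip (ψ y₁) (ψ y₂) ha hb hab).1
    have h1 : φ (ψ y₁) = y₁ := hφψ y₁ hy₁
    have h2 : φ (ψ y₂) = y₂ := hφψ y₂ hy₂
    simp only [f2, sV, Gtil, ← hs]
    linarith
end

section
/- The functions f₁ and f₂ are 1-Lipschitz; that is, for i = 1, 2 and all x₁, x₂, y₁, y₂ ∈ [0,1], |fᵢ(x₁, y₁) − fᵢ(x₂, y₂)| ≤ |x₁ − x₂| + |y₁ − y₂|. -/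
open Set MeasureTheory

lemma evar_le_aux_s7 {h M : ℝ → ℝ}
    (hM : ∀ s ∈ Set.Icc (0:ℝ) 1, ∀ t ∈ Set.Icc (0:ℝ) 1, s ≤ t → |h t - h s| ≤ M t - M s)
    {a b : ℝ} (ha : a ∈ Set.Icc (0:ℝ) 1) (hb : b ∈ Set.Icc (0:ℝ) 1) (_hab : a ≤ b) :
    eVariationOn h (Set.Icc 0 1 ∩ Set.Icc a b) ≤ ENNReal.ofReal (M b - M a) := by
  apply iSup_le
  rintro ⟨n, ⟨p, hmono, hmem⟩⟩
  have hmem1 : ∀ i, p i ∈ Set.Icc (0:ℝ) 1 := fun i => (hmem i).1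
  have hmem2 : ∀ i, p i ∈ Set.Icc a b := fun i => (hmem i).2
  calc (∑ i ∈ Finset.range n, edist (h (p (i + 1))) (h (p i)))
      = ∑ i ∈ Finset.range n, ENNReal.ofReal (M (p (i+1)) - M (p i) -
          (M (p (i+1)) - M (p i) - |h (p (i+1)) - h (p i)|)) := by
        apply Finset.sum_congr rfl
        intro i _
        rw [edist_dist, Real.dist_eq]
        ring_nf
    _ ≤ ∑ i ∈ Finset.range n, ENNReal.ofReal (M (p (i+1)) - M (p i)) := by
        apply Finset.sum_le_sum
        intro i _
        apply ENNReal.ofReal_le_ofReal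
        have := hM (p i) (hmem1 i) (p (i+1)) (hmem1 (i+1)) (hmono (Nat.le_succ i))
        linarith
    _ = ENNReal.ofReal (∑ i ∈ Finset.range n, (M (p (i+1)) - M (p i))) := by
        rw [ENNReal.ofReal_sum_of_nonneg]
        intro i _
        have := hM (p i) (hmem1 i) (p (i+1)) (hmem1 (i+1)) (hmono (Nat.le_succ i))
        have := abs_nonneg (h (p (i+1)) - h (p i))
        linarith
    _ = ENNReal.ofReal (M (p n) - M (p 0)) := by
        rw [Finset.sum_range_sub (fun i => M (p i))]
    _ ≤ ENNReal.ofReal (M b - M a) := by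
        apply ENNReal.ofReal_le_ofReal
        have h1 := hM (p n) (hmem1 n) b hb (hmem2 n).2
        have h2 := hM a ha (p 0) (hmem1 0) (hmem2 0).1
        have := abs_nonneg (h b - h (p n))
        have := abs_nonneg (h (p 0) - h a)
        linarith

lemma sV_bounds_aux {h M : ℝ → ℝ}
    (hM : ∀ s ∈ Set.Icc (0:ℝ) 1, ∀ t ∈ Set.Icc (0:ℝ) 1, s ≤ t → |h t - h s| ≤ M t - M s)
    {a b : ℝ} (ha : a ∈ Set.Icc (0:ℝ) 1) (hb : b ∈ Set.Icc (0:ℝ) 1) (hab : a ≤ b) :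
    |h b - h a| ≤ variationOnFromTo h (Set.Icc 0 1) a b ∧
      variationOnFromTo h (Set.Icc 0 1) a b ≤ M b - M a := by
  have hMab : |h b - h a| ≤ M b - M a := hM a ha b hb hab
  have h0 : (0:ℝ) ≤ M b - M a := le_trans (abs_nonneg _) hMab
  have hev := evar_le_aux_s7 hM ha hb hab
  rw [variationOnFromTo.eq_of_le h _ hab]
  constructor
  · have hle : edist (h a) (h b) ≤ eVariationOn h (Set.Icc 0 1 ∩ Set.Icc a b) :=
      eVariationOn.edist_le h ⟨ha, le_refl a, hab⟩ ⟨hb, hab, le_refl b⟩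
    have htop : eVariationOn h (Set.Icc 0 1 ∩ Set.Icc a b) ≠ ⊤ :=
      ne_top_of_le_ne_top ENNReal.ofReal_ne_top hev
    have := ENNReal.toReal_mono htop hle
    rwa [edist_dist, ENNReal.toReal_ofReal dist_nonneg, Real.dist_eq, abs_sub_comm] at this
  · exact ENNReal.toReal_le_of_le_ofReal h0 hev

lemma lbv_aux {h M : ℝ → ℝ}
    (hM : ∀ s ∈ Set.Icc (0:ℝ) 1, ∀ t ∈ Set.Icc (0:ℝ) 1, s ≤ t → |h t - h s| ≤ M t - M s) :
    LocallyBoundedVariationOn h (Set.Icc 0 1) := by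
  intro a b ha hb
  rcases le_total a b with hab | hba
  · exact ne_top_of_le_ne_top ENNReal.ofReal_ne_top (evar_le_aux_s7 hM ha hb hab)
  · rcases eq_or_lt_of_le hba with rfl | hba'
    · exact ne_top_of_le_ne_top ENNReal.ofReal_ne_top (evar_le_aux_s7 hM ha hb le_rfl)
    · unfold BoundedVariationOn
      rw [Set.Icc_eq_empty (not_le.2 hba'), Set.inter_empty,
        eVariationOn.subsingleton h Set.subsingleton_empty]
      exact ENNReal.zero_ne_top

theorem stmt_7
    (φ Γ : ℝ → ℝ)
    (hφcont : ContinuousOn φ (Set.Icc 0 1))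
    (hφmono : StrictMonoOn φ (Set.Icc 0 1))
    (hφ0 : φ 0 = 0) (hφ1 : φ 1 = 1)
    (hΓrange : ∀ t ∈ Set.Icc (0:ℝ) 1, max 0 (t + φ t - 1) ≤ Γ t ∧ Γ t ≤ min t (φ t))
    (hΓlip : ∀ t₁ t₂ : ℝ, t₁ ∈ Set.Icc (0:ℝ) 1 → t₂ ∈ Set.Icc (0:ℝ) 1 → t₁ ≤ t₂ →
      0 ≤ Γ t₂ - Γ t₁ ∧ Γ t₂ - Γ t₁ ≤ (t₂ - t₁) + (φ t₂ - φ t₁))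
    (ψ : ℝ → ℝ)
    (hψmem : ∀ y ∈ Set.Icc (0:ℝ) 1, ψ y ∈ Set.Icc (0:ℝ) 1)
    (hψφ : ∀ t ∈ Set.Icc (0:ℝ) 1, ψ (φ t) = t)
    (hφψ : ∀ y ∈ Set.Icc (0:ℝ) 1, φ (ψ y) = y) :
    (∀ x₁ ∈ Set.Icc (0:ℝ) 1, ∀ x₂ ∈ Set.Icc (0:ℝ) 1, ∀ y₁ ∈ Set.Icc (0:ℝ) 1, ∀ y₂ ∈ Set.Icc (0:ℝ) 1,
      |f1 ψ Γ x₁ y₁ - f1 ψ Γ x₂ y₂| ≤ |x₁ - x₂| + |y₁ - y₂|) ∧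
    (∀ x₁ ∈ Set.Icc (0:ℝ) 1, ∀ x₂ ∈ Set.Icc (0:ℝ) 1, ∀ y₁ ∈ Set.Icc (0:ℝ) 1, ∀ y₂ ∈ Set.Icc (0:ℝ) 1,
      |f2 φ ψ Γ x₁ y₁ - f2 φ ψ Γ x₂ y₂| ≤ |x₁ - x₂| + |y₁ - y₂|) := by
  have hφm : ∀ s ∈ Set.Icc (0:ℝ) 1, ∀ t ∈ Set.Icc (0:ℝ) 1, s ≤ t → φ s ≤ φ t :=
    fun s hs t ht hst => hφmono.monotoneOn hs ht hst
  -- increment bounds for Γ̂ with two majorants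
  have hM1 : ∀ s ∈ Set.Icc (0:ℝ) 1, ∀ t ∈ Set.Icc (0:ℝ) 1, s ≤ t →
      |Ghat Γ t - Ghat Γ s| ≤ (t + Γ t) - (s + Γ s) := by
    intro s hs t ht hst
    obtain ⟨hΓ0, hΓ1⟩ := hΓlip s t hs ht hst
    rw [abs_le]
    constructor <;> simp only [Ghat] <;> linarith
  have hM2 : ∀ s ∈ Set.Icc (0:ℝ) 1, ∀ t ∈ Set.Icc (0:ℝ) 1, s ≤ t →
      |Ghat Γ t - Ghat Γ s| ≤ (2*φ t + t - Γ t) - (2*φ s + s - Γ s) := by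
    intro s hs t ht hst
    obtain ⟨hΓ0, hΓ1⟩ := hΓlip s t hs ht hst
    have hφd := hφm s hs t ht hst
    rw [abs_le]
    constructor <;> simp only [Ghat] <;> linarith
  have hM3 : ∀ s ∈ Set.Icc (0:ℝ) 1, ∀ t ∈ Set.Icc (0:ℝ) 1, s ≤ t →
      |Gtil φ Γ t - Gtil φ Γ s| ≤ (φ t + Γ t) - (φ s + Γ s) := by
    intro s hs t ht hst
    obtain ⟨hΓ0, hΓ1⟩ := hΓlip s t hs ht hst
    have hφd := hφm s hs t ht hst
    rw [abs_le]
    constructor <;> simp only [Gtil] <;> linarith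
  have hM4 : ∀ s ∈ Set.Icc (0:ℝ) 1, ∀ t ∈ Set.Icc (0:ℝ) 1, s ≤ t →
      |Gtil φ Γ t - Gtil φ Γ s| ≤ (2*t + φ t - Γ t) - (2*s + φ s - Γ s) := by
    intro s hs t ht hst
    obtain ⟨hΓ0, hΓ1⟩ := hΓlip s t hs ht hst
    have hφd := hφm s hs t ht hst
    rw [abs_le]
    constructor <;> simp only [Gtil] <;> linarith
  have lbv1 : LocallyBoundedVariationOn (Ghat Γ) (Set.Icc 0 1) := lbv_aux hM1
  have lbv2 : LocallyBoundedVariationOn (Gtil φ Γ) (Set.Icc 0 1) := lbv_aux hM3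
  have hψm : ∀ y₁ ∈ Set.Icc (0:ℝ) 1, ∀ y₂ ∈ Set.Icc (0:ℝ) 1, y₁ ≤ y₂ → ψ y₁ ≤ ψ y₂ := by
    intro y₁ hy₁ y₂ hy₂ h12
    by_contra hlt
    push_neg at hlt
    have := hφmono (hψmem y₂ hy₂) (hψmem y₁ hy₁) hlt
    rw [hφψ y₂ hy₂, hφψ y₁ hy₁] at this
    linarith
  -- f1 is nondecreasing 1-Lipschitz in x
  have f1x : ∀ y ∈ Set.Icc (0:ℝ) 1, ∀ x₁ ∈ Set.Icc (0:ℝ) 1, ∀ x₂ ∈ Set.Icc (0:ℝ) 1, x₁ ≤ x₂ →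
      0 ≤ f1 ψ Γ x₂ y - f1 ψ Γ x₁ y ∧ f1 ψ Γ x₂ y - f1 ψ Γ x₁ y ≤ x₂ - x₁ := by
    intro y hy x₁ hx₁ x₂ hx₂ h12
    have hadd := variationOnFromTo.add lbv1 (hψmem y hy) hx₁ hx₂
    obtain ⟨hl, hu⟩ := sV_bounds_aux hM1 hx₁ hx₂ h12
    have hl2 : -(Ghat Γ x₂ - Ghat Γ x₁) ≤ variationOnFromTo (Ghat Γ) (Set.Icc 0 1) x₁ x₂ :=
      le_trans (neg_le_abs _) hl
    simp only [f1, sV, Ghat] at *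
    constructor <;> linarith
  -- f1 is nondecreasing 1-Lipschitz in y
  have f1y : ∀ x ∈ Set.Icc (0:ℝ) 1, ∀ y₁ ∈ Set.Icc (0:ℝ) 1, ∀ y₂ ∈ Set.Icc (0:ℝ) 1, y₁ ≤ y₂ →
      0 ≤ f1 ψ Γ x y₂ - f1 ψ Γ x y₁ ∧ f1 ψ Γ x y₂ - f1 ψ Γ x y₁ ≤ y₂ - y₁ := by
    intro x hx y₁ hy₁ y₂ hy₂ h12
    have ha := hψmem y₁ hy₁
    have hb := hψmem y₂ hy₂
    have hab := hψm y₁ hy₁ y₂ hy₂ h12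
    have hadd := variationOnFromTo.add lbv1 ha hb hx
    obtain ⟨hl, hu⟩ := sV_bounds_aux hM2 ha hb hab
    have hl2 : (Ghat Γ (ψ y₂) - Ghat Γ (ψ y₁)) ≤
        variationOnFromTo (Ghat Γ) (Set.Icc 0 1) (ψ y₁) (ψ y₂) := le_trans (le_abs_self _) hl
    rw [hφψ y₂ hy₂, hφψ y₁ hy₁] at hu
    simp only [f1, sV, Ghat] at *
    constructor <;> linarith
  -- f2 in x
  have f2x : ∀ y ∈ Set.Icc (0:ℝ) 1, ∀ x₁ ∈ Set.Icc (0:ℝ) 1, ∀ x₂ ∈ Set.Icc (0:ℝ) 1, x₁ ≤ x₂ →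
      0 ≤ f2 φ ψ Γ x₂ y - f2 φ ψ Γ x₁ y ∧ f2 φ ψ Γ x₂ y - f2 φ ψ Γ x₁ y ≤ x₂ - x₁ := by
    intro y hy x₁ hx₁ x₂ hx₂ h12
    have hadd := variationOnFromTo.add lbv2 hx₁ hx₂ (hψmem y hy)
    obtain ⟨hl, hu⟩ := sV_bounds_aux hM4 hx₁ hx₂ h12
    have hl2 : (Gtil φ Γ x₂ - Gtil φ Γ x₁) ≤
        variationOnFromTo (Gtil φ Γ) (Set.Icc 0 1) x₁ x₂ := le_trans (le_abs_self _) hl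
    simp only [f2, sV, Gtil] at *
    constructor <;> linarith
  -- f2 in y
  have f2y : ∀ x ∈ Set.Icc (0:ℝ) 1, ∀ y₁ ∈ Set.Icc (0:ℝ) 1, ∀ y₂ ∈ Set.Icc (0:ℝ) 1, y₁ ≤ y₂ →
      0 ≤ f2 φ ψ Γ x y₂ - f2 φ ψ Γ x y₁ ∧ f2 φ ψ Γ x y₂ - f2 φ ψ Γ x y₁ ≤ y₂ - y₁ := by
    intro x hx y₁ hy₁ y₂ hy₂ h12
    have ha := hψmem y₁ hy₁
    have hb := hψmem y₂ hy₂
    have hab := hψm y₁ hy₁ y₂ hy₂ h12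
    have hadd := variationOnFromTo.add lbv2 hx ha hb
    obtain ⟨hl, hu⟩ := sV_bounds_aux hM3 ha hb hab
    have hl2 : -(Gtil φ Γ (ψ y₂) - Gtil φ Γ (ψ y₁)) ≤
        variationOnFromTo (Gtil φ Γ) (Set.Icc 0 1) (ψ y₁) (ψ y₂) := le_trans (neg_le_abs _) hl
    have he1 : φ (ψ y₁) = y₁ := hφψ y₁ hy₁
    have he2 : φ (ψ y₂) = y₂ := hφψ y₂ hy₂
    rw [he1, he2] at hu
    simp only [f2, sV, Gtil] at *
    constructor <;> linarith
  constructor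
  · intro x₁ hx₁ x₂ hx₂ y₁ hy₁ y₂ hy₂
    have hX : |f1 ψ Γ x₁ y₁ - f1 ψ Γ x₂ y₁| ≤ |x₁ - x₂| := by
      rcases le_total x₁ x₂ with h | h
      · obtain ⟨h0, h1⟩ := f1x y₁ hy₁ x₁ hx₁ x₂ hx₂ h
        rw [abs_le]
        constructor <;> [skip; skip] <;>
          cases' abs_cases (x₁ - x₂) with hc hc <;> cases hc <;> linarith
      · obtain ⟨h0, h1⟩ := f1x y₁ hy₁ x₂ hx₂ x₁ hx₁ h
        rw [abs_le]
        constructor <;> [skip; skip] <;>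
          cases' abs_cases (x₁ - x₂) with hc hc <;> cases hc <;> linarith
    have hY : |f1 ψ Γ x₂ y₁ - f1 ψ Γ x₂ y₂| ≤ |y₁ - y₂| := by
      rcases le_total y₁ y₂ with h | h
      · obtain ⟨h0, h1⟩ := f1y x₂ hx₂ y₁ hy₁ y₂ hy₂ h
        rw [abs_le]
        constructor <;> [skip; skip] <;>
          cases' abs_cases (y₁ - y₂) with hc hc <;> cases hc <;> linarith
      · obtain ⟨h0, h1⟩ := f1y x₂ hx₂ y₂ hy₂ y₁ hy₁ h
        rw [abs_le]
        constructor <;> [skip; skip] <;>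
          cases' abs_cases (y₁ - y₂) with hc hc <;> cases hc <;> linarith
    calc |f1 ψ Γ x₁ y₁ - f1 ψ Γ x₂ y₂|
        ≤ |f1 ψ Γ x₁ y₁ - f1 ψ Γ x₂ y₁| + |f1 ψ Γ x₂ y₁ - f1 ψ Γ x₂ y₂| := abs_sub_le _ _ _
      _ ≤ |x₁ - x₂| + |y₁ - y₂| := add_le_add hX hY
  · intro x₁ hx₁ x₂ hx₂ y₁ hy₁ y₂ hy₂
    have hX : |f2 φ ψ Γ x₁ y₁ - f2 φ ψ Γ x₂ y₁| ≤ |x₁ - x₂| := by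
      rcases le_total x₁ x₂ with h | h
      · obtain ⟨h0, h1⟩ := f2x y₁ hy₁ x₁ hx₁ x₂ hx₂ h
        rw [abs_le]
        constructor <;> [skip; skip] <;>
          cases' abs_cases (x₁ - x₂) with hc hc <;> cases hc <;> linarith
      · obtain ⟨h0, h1⟩ := f2x y₁ hy₁ x₂ hx₂ x₁ hx₁ h
        rw [abs_le]
        constructor <;> [skip; skip] <;>
          cases' abs_cases (x₁ - x₂) with hc hc <;> cases hc <;> linarith
    have hY : |f2 φ ψ Γ x₂ y₁ - f2 φ ψ Γ x₂ y₂| ≤ |y₁ - y₂| := by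
      rcases le_total y₁ y₂ with h | h
      · obtain ⟨h0, h1⟩ := f2y x₂ hx₂ y₁ hy₁ y₂ hy₂ h
        rw [abs_le]
        constructor <;> [skip; skip] <;>
          cases' abs_cases (y₁ - y₂) with hc hc <;> cases hc <;> linarith
      · obtain ⟨h0, h1⟩ := f2y x₂ hx₂ y₂ hy₂ y₁ hy₁ h
        rw [abs_le]
        constructor <;> [skip; skip] <;>
          cases' abs_cases (y₁ - y₂) with hc hc <;> cases hc <;> linarith
    calc |f2 φ ψ Γ x₁ y₁ - f2 φ ψ Γ x₂ y₂|
        ≤ |f2 φ ψ Γ x₁ y₁ - f2 φ ψ Γ x₂ y₁| + |f2 φ ψ Γ x₂ y₁ - f2 φ ψ Γ x₂ y₂| := abs_sub_le _ _ _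
      _ ≤ |x₁ - x₂| + |y₁ - y₂| := add_le_add hX hY
end

section
/- The function C₁(x, y) = min{x, y, f₁(x, y)} is a copula with curvilinear section Γ, i.e., C₁ is a copula and C₁(t, φ(t)) = Γ(t) for all t ∈ [0,1]. -/
/-!
By additivity of the variation, `f₁(x, y) = u(x) + v(y)` with `u(x) = x - P(x)` and
`v(y) = N(φ⁻¹ y)`, where `P = (V_0^· Γ̂ + Γ̂) / 2` and `N = (V_0^· Γ̂ - Γ̂) / 2` are the positive and
negative variation functions of `Γ̂`. Writing `Γ̂ = id - Γ` and `Γ̂ = (id + φ - Γ) - φ` as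
differences of nondecreasing functions bounds the increments of `P` by those of `id` and the
increments of `N` by those of `φ`, so `u` and `v` are nondecreasing and 1-Lipschitz. For such `u`
and `v`, `min {x, y, u x + v y}` is 2-increasing, and its boundary conditions reduce to
`u 0 + v 0 = Γ 0 = 0` and `u 1 + v 1 = Γ 1 = 1`. The section property is `f₁(t, φ t) = Γ t`
together with `Γ t ≤ min {t, φ t}`.
-/

open Set MeasureTheory

theorem eVariationOn_sub_le {α E : Type*} [LinearOrder α] [SeminormedAddCommGroup E]
    (f g : α → E) (s : Set α) :
    eVariationOn (f - g) s ≤ eVariationOn f s + eVariationOn g s := by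
  refine iSup_le fun ⟨n, u, hu, us⟩ => ?_
  calc ∑ i ∈ Finset.range n, edist ((f - g) (u (i + 1))) ((f - g) (u i))
      ≤ ∑ i ∈ Finset.range n,
          (edist (f (u (i + 1))) (f (u i)) + edist (g (u (i + 1))) (g (u i))) := by
        gcongr with i
        rw [Pi.sub_apply, Pi.sub_apply, sub_eq_add_neg, sub_eq_add_neg, ← edist_neg_neg (g _)]
        exact edist_add_add_le _ _ _ _
    _ ≤ eVariationOn f s + eVariationOn g s := by
        rw [Finset.sum_add_distrib]
        exact add_le_add (eVariationOn.sum_le hu us) (eVariationOn.sum_le hu us)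

section MonotoneDifference

variable {α : Type*} [LinearOrder α] {g h : α → ℝ} {s : Set α}

theorem MonotoneOn.locallyBoundedVariationOn_sub (hg : MonotoneOn g s) (hh : MonotoneOn h s) :
    LocallyBoundedVariationOn (g - h) s := fun a b ha hb =>
  ne_top_of_le_ne_top
    (ENNReal.add_ne_top.2 ⟨hg.locallyBoundedVariationOn a b ha hb,
      hh.locallyBoundedVariationOn a b ha hb⟩)
    (eVariationOn_sub_le g h _)

theorem MonotoneOn.variationOnFromTo_sub_le (hg : MonotoneOn g s) (hh : MonotoneOn h s)
    {a b : α} (ha : a ∈ s) (hb : b ∈ s) (hab : a ≤ b) :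
    variationOnFromTo (g - h) s a b ≤ (g b - g a) + (h b - h a) := by
  have hga := sub_nonneg.2 (hg ha hb hab)
  have hha := sub_nonneg.2 (hh ha hb hab)
  rw [variationOnFromTo.eq_of_le _ _ hab]
  refine ENNReal.toReal_le_of_le_ofReal (add_nonneg hga hha) ?_
  rw [ENNReal.ofReal_add hga hha]
  exact (eVariationOn_sub_le g h _).trans
    (add_le_add (hg.eVariationOn_eq ha hb).le (hh.eVariationOn_eq ha hb).le)

theorem MonotoneOn.monotoneOn_sub_variationOnFromTo_add (hg : MonotoneOn g s)
    (hh : MonotoneOn h s) {a : α} (ha : a ∈ s) :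
    MonotoneOn (fun x => g x - (variationOnFromTo (g - h) s a x + (g - h) x) / 2) s := by
  intro b hb c hc hbc
  have hadd := variationOnFromTo.add (hg.locallyBoundedVariationOn_sub hh) ha hb hc
  have hle := hg.variationOnFromTo_sub_le hh hb hc hbc
  simp only [Pi.sub_apply]
  linarith

theorem MonotoneOn.monotoneOn_sub_variationOnFromTo_sub (hg : MonotoneOn g s)
    (hh : MonotoneOn h s) {a : α} (ha : a ∈ s) :
    MonotoneOn (fun x => h x - (variationOnFromTo (g - h) s a x - (g - h) x) / 2) s := by
  intro b hb c hc hbc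
  have hadd := variationOnFromTo.add (hg.locallyBoundedVariationOn_sub hh) ha hb hc
  have hle := hg.variationOnFromTo_sub_le hh hb hc hbc
  simp only [Pi.sub_apply]
  linarith

end MonotoneDifference

theorem min_min_add_rectangle_nonneg {x₁ x₂ y₁ y₂ p₁ p₂ q₁ q₂ : ℝ}
    (hp : p₁ ≤ p₂) (hpx : p₂ - p₁ ≤ x₂ - x₁) (hq : q₁ ≤ q₂) (hqy : q₂ - q₁ ≤ y₂ - y₁) :
    0 ≤ min x₂ (min y₂ (p₂ + q₂)) - min x₂ (min y₁ (p₂ + q₁))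
      - min x₁ (min y₂ (p₁ + q₂)) + min x₁ (min y₁ (p₁ + q₁)) := by
  simp only [min_def]
  split_ifs <;> linarith

theorem isCopula_min_min_add {u v : ℝ → ℝ}
    (hu : MonotoneOn u (Icc 0 1)) (hu' : MonotoneOn (fun x => x - u x) (Icc 0 1))
    (hv : MonotoneOn v (Icc 0 1)) (hv' : MonotoneOn (fun y => y - v y) (Icc 0 1))
    (h0 : 0 ≤ u 0 + v 0) (h1 : 1 ≤ u 1 + v 1) :
    IsCopula fun x y => min x (min y (u x + v y)) := by
  have h0m : (0:ℝ) ∈ Icc (0:ℝ) 1 := ⟨le_rfl, zero_le_one⟩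
  have h1m : (1:ℝ) ∈ Icc (0:ℝ) 1 := ⟨zero_le_one, le_rfl⟩
  have hpos : ∀ x ∈ Icc (0:ℝ) 1, ∀ y ∈ Icc (0:ℝ) 1, 0 ≤ u x + v y := fun x hx y hy =>
    h0.trans (add_le_add (hu h0m hx hx.1) (hv h0m hy hy.1))
  have hx1 : ∀ x ∈ Icc (0:ℝ) 1, x ≤ u x + v 1 := fun x hx => by
    linarith [hu' hx h1m hx.2]
  have h1y : ∀ y ∈ Icc (0:ℝ) 1, y ≤ u 1 + v y := fun y hy => by
    linarith [hv' hy h1m hy.2]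
  refine ⟨fun x hx y hy =>
      ⟨le_min hx.1 (le_min hy.1 (hpos x hx y hy)), (min_le_left _ _).trans hx.2⟩,
    fun x hx => ⟨?_, ?_, ?_, ?_⟩, fun x₁ x₂ y₁ y₂ hx₁ hx₂ hy₁ hy₂ hx hy => ?_⟩
  · simp [hx.1, hpos x hx 0 h0m]
  · simp [hx.1, hpos 0 h0m x hx]
  · simp [hx.2, hx1 x hx]
  · simp [hx.2, h1y x hx]
  · exact min_min_add_rectangle_nonneg (hu hx₁ hx₂ hx) (by linarith [hu' hx₁ hx₂ hx])
      (hv hy₁ hy₂ hy) (by linarith [hv' hy₁ hy₂ hy])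

theorem IsCopula.congr {C D : ℝ → ℝ → ℝ} (hC : IsCopula C)
    (h : ∀ x ∈ Icc (0:ℝ) 1, ∀ y ∈ Icc (0:ℝ) 1, C x y = D x y) : IsCopula D := by
  have h0m : (0:ℝ) ∈ Icc (0:ℝ) 1 := ⟨le_rfl, zero_le_one⟩
  have h1m : (1:ℝ) ∈ Icc (0:ℝ) 1 := ⟨zero_le_one, le_rfl⟩
  obtain ⟨hrange, hbdry, hrect⟩ := hC
  refine ⟨fun x hx y hy => h x hx y hy ▸ hrange x hx y hy, fun x hx => ?_,
    fun x₁ x₂ y₁ y₂ hx₁ hx₂ hy₁ hy₂ hx hy => ?_⟩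
  · rw [← h x hx 0 h0m, ← h 0 h0m x hx, ← h x hx 1 h1m, ← h 1 h1m x hx]
    exact hbdry x hx
  · rw [← h x₂ hx₂ y₂ hy₂, ← h x₂ hx₂ y₁ hy₁, ← h x₁ hx₁ y₂ hy₂, ← h x₁ hx₁ y₁ hy₁]
    exact hrect x₁ x₂ y₁ y₂ hx₁ hx₂ hy₁ hy₂ hx hy

section CurvilinearSection

variable (ψ Γ : ℝ → ℝ)

noncomputable def f1Left (x : ℝ) : ℝ := x - (sV (Ghat Γ) 0 x + Ghat Γ x) / 2

noncomputable def f1Right (y : ℝ) : ℝ := (sV (Ghat Γ) 0 (ψ y) - Ghat Γ (ψ y)) / 2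

theorem f1_eq_f1Left_add_f1Right (hG : LocallyBoundedVariationOn (Ghat Γ) (Icc 0 1))
    {x y : ℝ} (hx : x ∈ Icc (0:ℝ) 1) (hy : ψ y ∈ Icc (0:ℝ) 1) :
    f1 ψ Γ x y = f1Left Γ x + f1Right ψ Γ y := by
  have := variationOnFromTo.sub_right hG ⟨le_rfl, zero_le_one⟩ hx hy
  simp only [f1, f1Left, f1Right, sV] at *
  linarith

theorem f1_apply_self {φ : ℝ → ℝ} {t : ℝ} (ht : ψ (φ t) = t) : f1 ψ Γ t (φ t) = Γ t := by
  simp only [f1, ht, sV, variationOnFromTo.self, Ghat]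
  ring

theorem monotoneOn_f1Left (hΓ : MonotoneOn Γ (Icc 0 1)) : MonotoneOn (f1Left Γ) (Icc 0 1) :=
  monotoneOn_id.monotoneOn_sub_variationOnFromTo_add hΓ ⟨le_rfl, zero_le_one⟩

theorem monotoneOn_sub_f1Left (hG : LocallyBoundedVariationOn (Ghat Γ) (Icc 0 1)) :
    MonotoneOn (fun x => x - f1Left Γ x) (Icc 0 1) := by
  intro a ha b hb hab
  have := variationOnFromTo.add_self_monotoneOn hG ⟨le_rfl, zero_le_one⟩ ha hb hab
  simp only [f1Left, sV, Pi.add_apply] at *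
  linarith

variable {ψ}

theorem monotoneOn_f1Right (hψ : MonotoneOn ψ (Icc 0 1)) (hψmem : MapsTo ψ (Icc 0 1) (Icc 0 1))
    (hG : LocallyBoundedVariationOn (Ghat Γ) (Icc 0 1)) :
    MonotoneOn (f1Right ψ Γ) (Icc 0 1) := by
  intro a ha b hb hab
  have := variationOnFromTo.sub_self_monotoneOn hG ⟨le_rfl, zero_le_one⟩ (hψmem ha) (hψmem hb)
    (hψ ha hb hab)
  simp only [f1Right, sV, Pi.sub_apply] at *
  linarith

theorem monotoneOn_sub_f1Right (hψ : MonotoneOn ψ (Icc 0 1))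
    (hψmem : MapsTo ψ (Icc 0 1) (Icc 0 1)) {φ : ℝ → ℝ} (hφ : MonotoneOn φ (Icc 0 1))
    (hφψ : ∀ y ∈ Icc (0:ℝ) 1, φ (ψ y) = y)
    (hΓ : MonotoneOn (fun t => t + φ t - Γ t) (Icc 0 1)) :
    MonotoneOn (fun y => y - f1Right ψ Γ y) (Icc 0 1) := by
  have hG : Ghat Γ = (fun t => t + φ t - Γ t) - φ := by
    ext t
    simp only [Ghat, Pi.sub_apply]
    ring
  intro a ha b hb hab
  have := hΓ.monotoneOn_sub_variationOnFromTo_sub hφ ⟨le_rfl, zero_le_one⟩ (hψmem ha) (hψmem hb)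
    (hψ ha hb hab)
  rw [← hG] at this
  simp only [f1Right, sV] at *
  rw [hφψ a ha, hφψ b hb] at this
  linarith

end CurvilinearSection

theorem stmt_8_general
    (φ Γ : ℝ → ℝ)
    (hφmono : StrictMonoOn φ (Set.Icc 0 1))
    (hφ0 : φ 0 = 0) (hφ1 : φ 1 = 1)
    (hΓrange : ∀ t ∈ Set.Icc (0:ℝ) 1, max 0 (t + φ t - 1) ≤ Γ t ∧ Γ t ≤ min t (φ t))
    (hΓlip : ∀ t₁ t₂ : ℝ, t₁ ∈ Set.Icc (0:ℝ) 1 → t₂ ∈ Set.Icc (0:ℝ) 1 → t₁ ≤ t₂ →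
      0 ≤ Γ t₂ - Γ t₁ ∧ Γ t₂ - Γ t₁ ≤ (t₂ - t₁) + (φ t₂ - φ t₁))
    (ψ : ℝ → ℝ)
    (hψmem : ∀ y ∈ Set.Icc (0:ℝ) 1, ψ y ∈ Set.Icc (0:ℝ) 1)
    (hψφ : ∀ t ∈ Set.Icc (0:ℝ) 1, ψ (φ t) = t)
    (hφψ : ∀ y ∈ Set.Icc (0:ℝ) 1, φ (ψ y) = y) :
    IsCopula (C1 ψ Γ) ∧ ∀ t ∈ Set.Icc (0:ℝ) 1, C1 ψ Γ t (φ t) = Γ t := by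
  have h0 : (0:ℝ) ∈ Icc (0:ℝ) 1 := ⟨le_rfl, zero_le_one⟩
  have h1 : (1:ℝ) ∈ Icc (0:ℝ) 1 := ⟨zero_le_one, le_rfl⟩
  have hψ : MonotoneOn ψ (Icc 0 1) := fun a ha b hb hab =>
    (hφmono.le_iff_le (hψmem a ha) (hψmem b hb)).1 (by rwa [hφψ a ha, hφψ b hb])
  have hΓ : MonotoneOn Γ (Icc 0 1) := fun a ha b hb hab => by
    linarith [(hΓlip a b ha hb hab).1]
  have hΓ' : MonotoneOn (fun t => t + φ t - Γ t) (Icc 0 1) := fun a ha b hb hab => by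
    linarith [(hΓlip a b ha hb hab).2, hφmono.monotoneOn ha hb hab]
  have hG : LocallyBoundedVariationOn (Ghat Γ) (Icc 0 1) :=
    monotoneOn_id.locallyBoundedVariationOn_sub hΓ
  have hf1 : ∀ x ∈ Icc (0:ℝ) 1, ∀ y ∈ Icc (0:ℝ) 1,
      f1 ψ Γ x y = f1Left Γ x + f1Right ψ Γ y := fun x hx y hy =>
    f1_eq_f1Left_add_f1Right ψ Γ hG hx (hψmem y hy)
  have hsection : ∀ t ∈ Icc (0:ℝ) 1, f1 ψ Γ t (φ t) = Γ t := fun t ht =>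
    f1_apply_self ψ Γ (hψφ t ht)
  refine ⟨(isCopula_min_min_add (monotoneOn_f1Left Γ hΓ) (monotoneOn_sub_f1Left Γ hG)
    (monotoneOn_f1Right Γ hψ hψmem hG)
    (monotoneOn_sub_f1Right Γ hψ hψmem hφmono.monotoneOn hφψ hΓ') ?_ ?_).congr
    fun x hx y hy => by rw [C1, hf1 x hx y hy], fun t ht => ?_⟩
  · calc (0:ℝ) ≤ Γ 0 := (le_max_left _ _).trans (hΓrange 0 h0).1
      _ = _ := by rw [← hsection 0 h0, hφ0, hf1 0 h0 0 h0]
  · calc (1:ℝ) ≤ Γ 1 := le_trans (by norm_num [hφ1]) (hΓrange 1 h1).1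
      _ = _ := by rw [← hsection 1 h1, hφ1, hf1 1 h1 1 h1]
  · obtain ⟨hΓt, hΓφt⟩ := le_min_iff.1 (hΓrange t ht).2
    rw [C1, hsection t ht, min_eq_right hΓφt, min_eq_right hΓt]

theorem stmt_8
    (φ Γ : ℝ → ℝ)
    (hφcont : ContinuousOn φ (Set.Icc 0 1))
    (hφmono : StrictMonoOn φ (Set.Icc 0 1))
    (hφ0 : φ 0 = 0) (hφ1 : φ 1 = 1)
    (hΓrange : ∀ t ∈ Set.Icc (0:ℝ) 1, max 0 (t + φ t - 1) ≤ Γ t ∧ Γ t ≤ min t (φ t))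
    (hΓlip : ∀ t₁ t₂ : ℝ, t₁ ∈ Set.Icc (0:ℝ) 1 → t₂ ∈ Set.Icc (0:ℝ) 1 → t₁ ≤ t₂ →
      0 ≤ Γ t₂ - Γ t₁ ∧ Γ t₂ - Γ t₁ ≤ (t₂ - t₁) + (φ t₂ - φ t₁))
    (ψ : ℝ → ℝ)
    (hψmem : ∀ y ∈ Set.Icc (0:ℝ) 1, ψ y ∈ Set.Icc (0:ℝ) 1)
    (hψφ : ∀ t ∈ Set.Icc (0:ℝ) 1, ψ (φ t) = t)
    (hφψ : ∀ y ∈ Set.Icc (0:ℝ) 1, φ (ψ y) = y) :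
    IsCopula (C1 ψ Γ) ∧ ∀ t ∈ Set.Icc (0:ℝ) 1, C1 ψ Γ t (φ t) = Γ t :=
  stmt_8_general φ Γ hφmono hφ0 hφ1 hΓrange hΓlip ψ hψmem hψφ hφψ
end

section
/- The function C₂(x, y) = min{x, y, f₂(x, y)} is a copula with curvilinear section Γ, i.e., C₂ is a copula and C₂(t, φ(t)) = Γ(t) for all t ∈ [0,1]. -/
open Set MeasureTheory

/- ### Auxiliary lemmas -/

lemma my_evar_le {f g : ℝ → ℝ} {s : Set ℝ} (hg : MonotoneOn g s)
    (h : ∀ x ∈ s, ∀ y ∈ s, x ≤ y → |f y - f x| ≤ g y - g x)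
    {a b : ℝ} (ha : a ∈ s) (hb : b ∈ s) :
    eVariationOn f (s ∩ Set.Icc a b) ≤ ENNReal.ofReal (g b - g a) := by
  apply iSup_le _
  rintro ⟨n, ⟨u, hu, us⟩⟩
  calc
    (∑ i ∈ Finset.range n, edist (f (u (i + 1))) (f (u i))) =
        ∑ i ∈ Finset.range n, ENNReal.ofReal |f (u (i + 1)) - f (u i)| := by
      refine Finset.sum_congr rfl fun i _ => ?_
      rw [edist_dist, Real.dist_eq]
    _ ≤ ∑ i ∈ Finset.range n, ENNReal.ofReal (g (u (i + 1)) - g (u i)) := by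
      refine Finset.sum_le_sum fun i _ => ENNReal.ofReal_le_ofReal ?_
      exact h _ (us i).1 _ (us (i + 1)).1 (hu (Nat.le_succ _))
    _ = ENNReal.ofReal (∑ i ∈ Finset.range n, (g (u (i + 1)) - g (u i))) := by
      rw [ENNReal.ofReal_sum_of_nonneg]
      intro i _
      exact sub_nonneg.2 (hg (us i).1 (us (i + 1)).1 (hu (Nat.le_succ _)))
    _ = ENNReal.ofReal (g (u n) - g (u 0)) := by rw [Finset.sum_range_sub fun i => g (u i)]
    _ ≤ ENNReal.ofReal (g b - g a) := ENNReal.ofReal_le_ofReal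
        (sub_le_sub (hg (us n).1 hb (us n).2.2) (hg ha (us 0).1 (us 0).2.1))

lemma sV_le_of_abs_le {f g : ℝ → ℝ} {s : Set ℝ} (hg : MonotoneOn g s)
    (h : ∀ x ∈ s, ∀ y ∈ s, x ≤ y → |f y - f x| ≤ g y - g x)
    {a b : ℝ} (ha : a ∈ s) (hb : b ∈ s) (hab : a ≤ b) :
    variationOnFromTo f s a b ≤ g b - g a := by
  rw [variationOnFromTo.eq_of_le f s hab]
  exact ENNReal.toReal_le_of_le_ofReal (sub_nonneg.2 (hg ha hb hab)) (my_evar_le hg h ha hb)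

lemma abs_sub_le_sV {f : ℝ → ℝ} {s : Set ℝ} (hf : LocallyBoundedVariationOn f s)
    {a b : ℝ} (ha : a ∈ s) (hb : b ∈ s) (hab : a ≤ b) :
    |f b - f a| ≤ variationOnFromTo f s a b := by
  rw [variationOnFromTo.eq_of_le f s hab, ← Real.dist_eq, dist_comm, dist_edist]
  exact ENNReal.toReal_mono (hf a b ha hb)
    (eVariationOn.edist_le f ⟨ha, le_rfl, hab⟩ ⟨hb, hab, le_rfl⟩)

lemma min3_super {X1 X2 Y1 Y2 A1 A2 B1 B2 : ℝ}
    (h1 : 0 ≤ A2 - A1) (h2 : A2 - A1 ≤ X2 - X1)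
    (h3 : 0 ≤ B2 - B1) (h4 : B2 - B1 ≤ Y2 - Y1) :
    0 ≤ min X2 (min Y2 (A2 + B2)) - min X2 (min Y1 (A2 + B1))
      - min X1 (min Y2 (A1 + B2)) + min X1 (min Y1 (A1 + B1)) := by
  have u1 : min X2 (min Y1 (A2 + B1)) ≤ X2 := min_le_left _ _
  have u2 : min X2 (min Y1 (A2 + B1)) ≤ Y1 := (min_le_right _ _).trans (min_le_left _ _)
  have u3 : min X2 (min Y1 (A2 + B1)) ≤ A2 + B1 := (min_le_right _ _).trans (min_le_right _ _)
  have v1 : min X1 (min Y2 (A1 + B2)) ≤ X1 := min_le_left _ _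
  have v2 : min X1 (min Y2 (A1 + B2)) ≤ Y2 := (min_le_right _ _).trans (min_le_left _ _)
  have v3 : min X1 (min Y2 (A1 + B2)) ≤ A1 + B2 := (min_le_right _ _).trans (min_le_right _ _)
  have c1 : min X1 (min Y1 (A1 + B1)) = X1 ∨ min X1 (min Y1 (A1 + B1)) = Y1 ∨
      min X1 (min Y1 (A1 + B1)) = A1 + B1 := by
    rcases min_choice X1 (min Y1 (A1 + B1)) with h | h
    · exact Or.inl h
    · rcases min_choice Y1 (A1 + B1) with h' | h'
      · exact Or.inr (Or.inl (h.trans h'))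
      · exact Or.inr (Or.inr (h.trans h'))
  have c2 : min X2 (min Y2 (A2 + B2)) = X2 ∨ min X2 (min Y2 (A2 + B2)) = Y2 ∨
      min X2 (min Y2 (A2 + B2)) = A2 + B2 := by
    rcases min_choice X2 (min Y2 (A2 + B2)) with h | h
    · exact Or.inl h
    · rcases min_choice Y2 (A2 + B2) with h' | h'
      · exact Or.inr (Or.inl (h.trans h'))
      · exact Or.inr (Or.inr (h.trans h'))
  rcases c1 with e | e | e <;> rcases c2 with f | f | f <;> rw [e, f] <;> linarith

/-- Negative-variation part `N(x) = (V_0^x(Γ̃) - Γ̃(x))/2`. -/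
noncomputable def aN (φ Γ : ℝ → ℝ) (x : ℝ) : ℝ := (sV (Gtil φ Γ) 0 x - Gtil φ Γ x) / 2

/-- `y - P(ψ(y))` where `P` is the positive-variation part of `Γ̃`. -/
noncomputable def bP (φ ψ Γ : ℝ → ℝ) (y : ℝ) : ℝ :=
  y - (sV (Gtil φ Γ) 0 (ψ y) + Gtil φ Γ (ψ y)) / 2

theorem stmt_9
    (φ Γ : ℝ → ℝ)
    (hφcont : ContinuousOn φ (Set.Icc 0 1))
    (hφmono : StrictMonoOn φ (Set.Icc 0 1))
    (hφ0 : φ 0 = 0) (hφ1 : φ 1 = 1)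
    (hΓrange : ∀ t ∈ Set.Icc (0:ℝ) 1, max 0 (t + φ t - 1) ≤ Γ t ∧ Γ t ≤ min t (φ t))
    (hΓlip : ∀ t₁ t₂ : ℝ, t₁ ∈ Set.Icc (0:ℝ) 1 → t₂ ∈ Set.Icc (0:ℝ) 1 → t₁ ≤ t₂ →
      0 ≤ Γ t₂ - Γ t₁ ∧ Γ t₂ - Γ t₁ ≤ (t₂ - t₁) + (φ t₂ - φ t₁))
    (ψ : ℝ → ℝ)
    (hψmem : ∀ y ∈ Set.Icc (0:ℝ) 1, ψ y ∈ Set.Icc (0:ℝ) 1)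
    (hψφ : ∀ t ∈ Set.Icc (0:ℝ) 1, ψ (φ t) = t)
    (hφψ : ∀ y ∈ Set.Icc (0:ℝ) 1, φ (ψ y) = y) :
    IsCopula (C2 φ ψ Γ) ∧ ∀ t ∈ Set.Icc (0:ℝ) 1, C2 φ ψ Γ t (φ t) = Γ t := by
  have h0s : (0:ℝ) ∈ Set.Icc (0:ℝ) 1 := by constructor <;> norm_num
  have h1s : (1:ℝ) ∈ Set.Icc (0:ℝ) 1 := by constructor <;> norm_num
  have hΓ0 : Γ 0 = 0 := by
    have h := hΓrange 0 h0s
    rw [hφ0] at h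
    have ha : (0:ℝ) ≤ Γ 0 := le_trans (le_max_left _ _) h.1
    have hb : Γ 0 ≤ 0 := le_trans h.2 (min_le_left _ _)
    linarith
  have hΓ1 : Γ 1 = 1 := by
    have h := hΓrange 1 h1s
    rw [hφ1] at h
    have ha : (1:ℝ) ≤ Γ 1 := le_trans (by norm_num) h.1
    have hb : Γ 1 ≤ 1 := le_trans h.2 (min_le_left _ _)
    linarith
  have hψ0 : ψ 0 = 0 := by have h := hψφ 0 h0s; rwa [hφ0] at h
  have hψ1 : ψ 1 = 1 := by have h := hψφ 1 h1s; rwa [hφ1] at h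
  have hG0 : Gtil φ Γ 0 = 0 := by simp [Gtil, hφ0, hΓ0]
  have hG1 : Gtil φ Γ 1 = 0 := by simp [Gtil, hφ1, hΓ1]
  have hφm : MonotoneOn φ (Set.Icc 0 1) := hφmono.monotoneOn
  -- monotone majorants of the variation of `Γ̃`
  have hg1 : MonotoneOn (fun t => 2 * t + Gtil φ Γ t) (Set.Icc (0:ℝ) 1) := by
    intro x hx y hy hxy
    have h2 := (hΓlip x y hx hy hxy).2
    simp only [Gtil]
    linarith
  have habs1 : ∀ x ∈ Set.Icc (0:ℝ) 1, ∀ y ∈ Set.Icc (0:ℝ) 1, x ≤ y →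
      |Gtil φ Γ y - Gtil φ Γ x| ≤ (2 * y + Gtil φ Γ y) - (2 * x + Gtil φ Γ x) := by
    intro x hx y hy hxy
    have h2 := (hΓlip x y hx hy hxy).2
    rw [abs_le]
    constructor <;> simp only [Gtil] <;> linarith
  have hg2 : MonotoneOn (fun t => φ t + Γ t) (Set.Icc (0:ℝ) 1) := by
    intro x hx y hy hxy
    have h1 := (hΓlip x y hx hy hxy).1
    have h2 := hφm hx hy hxy
    simp only
    linarith
  have habs2 : ∀ x ∈ Set.Icc (0:ℝ) 1, ∀ y ∈ Set.Icc (0:ℝ) 1, x ≤ y →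
      |Gtil φ Γ y - Gtil φ Γ x| ≤ (φ y + Γ y) - (φ x + Γ x) := by
    intro x hx y hy hxy
    have h1 := (hΓlip x y hx hy hxy).1
    have h2 := hφm hx hy hxy
    rw [abs_le]
    constructor <;> simp only [Gtil] <;> linarith
  have hGbv : LocallyBoundedVariationOn (Gtil φ Γ) (Set.Icc 0 1) := fun a b ha hb =>
    ((my_evar_le hg1 habs1 ha hb).trans_lt ENNReal.ofReal_lt_top).ne
  have hadd : ∀ a ∈ Set.Icc (0:ℝ) 1, ∀ b ∈ Set.Icc (0:ℝ) 1, ∀ c ∈ Set.Icc (0:ℝ) 1,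
      sV (Gtil φ Γ) a b + sV (Gtil φ Γ) b c = sV (Gtil φ Γ) a c :=
    fun a ha b hb c hc => variationOnFromTo.add hGbv ha hb hc
  have hlow : ∀ a ∈ Set.Icc (0:ℝ) 1, ∀ b ∈ Set.Icc (0:ℝ) 1, a ≤ b →
      |Gtil φ Γ b - Gtil φ Γ a| ≤ sV (Gtil φ Γ) a b :=
    fun a ha b hb hab => abs_sub_le_sV hGbv ha hb hab
  have hup1 : ∀ a ∈ Set.Icc (0:ℝ) 1, ∀ b ∈ Set.Icc (0:ℝ) 1, a ≤ b →
      sV (Gtil φ Γ) a b ≤ (2 * b + Gtil φ Γ b) - (2 * a + Gtil φ Γ a) :=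
    fun a ha b hb hab => sV_le_of_abs_le hg1 habs1 ha hb hab
  have hup2 : ∀ a ∈ Set.Icc (0:ℝ) 1, ∀ b ∈ Set.Icc (0:ℝ) 1, a ≤ b →
      sV (Gtil φ Γ) a b ≤ (φ b + Γ b) - (φ a + Γ a) :=
    fun a ha b hb hab => sV_le_of_abs_le hg2 habs2 ha hb hab
  have hψm : ∀ y₁ ∈ Set.Icc (0:ℝ) 1, ∀ y₂ ∈ Set.Icc (0:ℝ) 1, y₁ ≤ y₂ → ψ y₁ ≤ ψ y₂ := by
    intro y₁ h₁ y₂ h₂ h12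
    by_contra hc
    push_neg at hc
    have h := hφmono (hψmem y₂ h₂) (hψmem y₁ h₁) hc
    rw [hφψ y₁ h₁, hφψ y₂ h₂] at h
    linarith
  -- decomposition of f₂
  have hf2 : ∀ x ∈ Set.Icc (0:ℝ) 1, ∀ y ∈ Set.Icc (0:ℝ) 1,
      f2 φ ψ Γ x y = aN φ Γ x + bP φ ψ Γ y := by
    intro x hx y hy
    have hψy := hψmem y hy
    have hA := hadd 0 h0s x hx (ψ y) hψy
    simp only [f2, aN, bP]
    linarith
  have haN : ∀ x₁ ∈ Set.Icc (0:ℝ) 1, ∀ x₂ ∈ Set.Icc (0:ℝ) 1, x₁ ≤ x₂ →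
      0 ≤ aN φ Γ x₂ - aN φ Γ x₁ ∧ aN φ Γ x₂ - aN φ Γ x₁ ≤ x₂ - x₁ := by
    intro x₁ h₁ x₂ h₂ h12
    have hA := hadd 0 h0s x₁ h₁ x₂ h₂
    have hl := abs_le.mp (hlow x₁ h₁ x₂ h₂ h12)
    have hu := hup1 x₁ h₁ x₂ h₂ h12
    constructor <;> simp only [aN] <;> linarith [hl.1, hl.2]
  have hbP : ∀ y₁ ∈ Set.Icc (0:ℝ) 1, ∀ y₂ ∈ Set.Icc (0:ℝ) 1, y₁ ≤ y₂ →
      0 ≤ bP φ ψ Γ y₂ - bP φ ψ Γ y₁ ∧ bP φ ψ Γ y₂ - bP φ ψ Γ y₁ ≤ y₂ - y₁ := by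
    intro y₁ h₁ y₂ h₂ h12
    have ht₁ := hψmem y₁ h₁
    have ht₂ := hψmem y₂ h₂
    have htle := hψm y₁ h₁ y₂ h₂ h12
    have hA := hadd 0 h0s (ψ y₁) ht₁ (ψ y₂) ht₂
    have hl := abs_le.mp (hlow _ ht₁ _ ht₂ htle)
    have hu := hup2 _ ht₁ _ ht₂ htle
    rw [hφψ y₁ h₁, hφψ y₂ h₂] at hu
    simp only [Gtil] at hl
    rw [hφψ y₁ h₁, hφψ y₂ h₂] at hl
    constructor <;> simp only [bP, Gtil] <;> rw [hφψ y₁ h₁, hφψ y₂ h₂] <;>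
      linarith [hl.1, hl.2]
  have haN0 : aN φ Γ 0 = 0 := by
    simp [aN, sV, variationOnFromTo.self, hG0]
  have hbP0 : bP φ ψ Γ 0 = 0 := by
    simp [bP, hψ0, sV, variationOnFromTo.self, hG0]
  have haNnn : ∀ x ∈ Set.Icc (0:ℝ) 1, 0 ≤ aN φ Γ x := by
    intro x hx
    have h := (haN 0 h0s x hx hx.1).1
    rw [haN0] at h
    linarith
  have hbPnn : ∀ y ∈ Set.Icc (0:ℝ) 1, 0 ≤ bP φ ψ Γ y := by
    intro y hy
    have h := (hbP 0 h0s y hy hy.1).1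
    rw [hbP0] at h
    linarith
  have hb1 : ∀ x ∈ Set.Icc (0:ℝ) 1, x ≤ aN φ Γ x + bP φ ψ Γ 1 := by
    intro x hx
    have hA := hadd 0 h0s x hx 1 h1s
    have hu := hup1 x hx 1 h1s hx.2
    rw [hG1] at hu
    simp only [aN, bP, hψ1]
    rw [hG1]
    linarith
  have ha1 : ∀ y ∈ Set.Icc (0:ℝ) 1, y ≤ aN φ Γ 1 + bP φ ψ Γ y := by
    intro y hy
    have ht := hψmem y hy
    have hA := hadd 0 h0s (ψ y) ht 1 h1s
    have hl' := hlow (ψ y) ht 1 h1s ht.2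
    rw [hG1] at hl'
    have hl := abs_le.mp hl'
    simp only [aN, bP]
    rw [hG1]
    linarith [hl.1, hl.2]
  refine ⟨⟨?_, ?_, ?_⟩, ?_⟩
  · -- range
    intro x hx y hy
    rw [Set.mem_Icc]
    constructor
    · simp only [C2]
      refine le_min hx.1 (le_min hy.1 ?_)
      rw [hf2 x hx y hy]
      exact add_nonneg (haNnn x hx) (hbPnn y hy)
    · exact le_trans (min_le_left _ _) hx.2
  · -- boundary conditions
    intro x hx
    refine ⟨?_, ?_, ?_, ?_⟩
    · simp only [C2]
      rw [hf2 x hx 0 h0s, hbP0, add_zero, min_eq_left (haNnn x hx), min_eq_right hx.1]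
    · simp only [C2]
      rw [hf2 0 h0s x hx, haN0, zero_add, min_eq_left (le_min hx.1 (hbPnn x hx))]
    · simp only [C2]
      rw [hf2 x hx 1 h1s, min_eq_left (le_min hx.2 (hb1 x hx))]
    · simp only [C2]
      rw [hf2 1 h1s x hx, min_eq_left (ha1 x hx), min_eq_right hx.2]
  · -- 2-increasing
    intro x₁ x₂ y₁ y₂ hx₁ hx₂ hy₁ hy₂ hxx hyy
    simp only [C2]
    rw [hf2 x₂ hx₂ y₂ hy₂, hf2 x₂ hx₂ y₁ hy₁, hf2 x₁ hx₁ y₂ hy₂, hf2 x₁ hx₁ y₁ hy₁]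
    exact min3_super (haN x₁ hx₁ x₂ hx₂ hxx).1 (haN x₁ hx₁ x₂ hx₂ hxx).2
      (hbP y₁ hy₁ y₂ hy₂ hyy).1 (hbP y₁ hy₁ y₂ hy₂ hyy).2
  · -- curvilinear section
    intro t ht
    have hφt : φ t ∈ Set.Icc (0:ℝ) 1 :=
      ⟨hφ0 ▸ hφm h0s ht ht.1, hφ1 ▸ hφm ht h1s ht.2⟩
    simp only [C2]
    rw [hf2 t ht (φ t) hφt]
    have hval : aN φ Γ t + bP φ ψ Γ (φ t) = Γ t := by
      simp only [aN, bP, hψφ t ht, Gtil]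
      ring
    rw [hval]
    have h1 := (hΓrange t ht).2
    rw [min_eq_right (le_trans h1 (min_le_right _ _)),
      min_eq_right (le_trans h1 (min_le_left _ _))]
end

section
/- Let C be any copula with curvilinear section Γ, i.e., C(t, φ(t)) = Γ(t) for all t ∈ [0,1]. Then for every (x, y) ∈ [0,1]² with y ≤ φ(x), one has C(x, y) ≤ x − (1/2)(V_{φ⁻¹(y)}^x(Γ̂) + Γ̂(x) + Γ̂(φ⁻¹(y))), and for every (x, y) ∈ [0,1]² with y ≥ φ(x), one has C(x, y) ≤ y − (1/2)(V_x^{φ⁻¹(y)}(Γ̃) + Γ̃(x) + Γ̃(φ⁻¹(y))). -/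
open Set MeasureTheory

theorem stmt_10
    (φ Γ : ℝ → ℝ)
    (hφcont : ContinuousOn φ (Set.Icc 0 1))
    (hφmono : StrictMonoOn φ (Set.Icc 0 1))
    (hφ0 : φ 0 = 0) (hφ1 : φ 1 = 1)
    (hΓrange : ∀ t ∈ Set.Icc (0:ℝ) 1, max 0 (t + φ t - 1) ≤ Γ t ∧ Γ t ≤ min t (φ t))
    (hΓlip : ∀ t₁ t₂ : ℝ, t₁ ∈ Set.Icc (0:ℝ) 1 → t₂ ∈ Set.Icc (0:ℝ) 1 → t₁ ≤ t₂ →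
      0 ≤ Γ t₂ - Γ t₁ ∧ Γ t₂ - Γ t₁ ≤ (t₂ - t₁) + (φ t₂ - φ t₁))
    (ψ : ℝ → ℝ)
    (hψmem : ∀ y ∈ Set.Icc (0:ℝ) 1, ψ y ∈ Set.Icc (0:ℝ) 1)
    (hψφ : ∀ t ∈ Set.Icc (0:ℝ) 1, ψ (φ t) = t)
    (hφψ : ∀ y ∈ Set.Icc (0:ℝ) 1, φ (ψ y) = y)
    (C : ℝ → ℝ → ℝ) (hC : IsCopula C)
    (hsec : ∀ t ∈ Set.Icc (0:ℝ) 1, C t (φ t) = Γ t) :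
    ∀ x ∈ Set.Icc (0:ℝ) 1, ∀ y ∈ Set.Icc (0:ℝ) 1,
      (y ≤ φ x → C x y ≤ x - (1/2) * (sV (Ghat Γ) (ψ y) x + Ghat Γ x + Ghat Γ (ψ y))) ∧
      (φ x ≤ y → C x y ≤ y - (1/2) * (sV (Gtil φ Γ) x (ψ y) + Gtil φ Γ x + Gtil φ Γ (ψ y))) := by
  obtain ⟨hCrange, hCbd, hC2⟩ := hC
  have h01 : (0:ℝ) ∈ Set.Icc (0:ℝ) 1 := left_mem_Icc.2 zero_le_one
  have h11 : (1:ℝ) ∈ Set.Icc (0:ℝ) 1 := right_mem_Icc.2 zero_le_one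
  have hφmemI : ∀ t ∈ Set.Icc (0:ℝ) 1, φ t ∈ Set.Icc (0:ℝ) 1 := by
    intro t ht
    constructor
    · rw [← hφ0]; exact hφmono.monotoneOn h01 ht ht.1
    · rw [← hφ1]; exact hφmono.monotoneOn ht h11 ht.2
  intro x hx y hy
  constructor
  · -- first case: y ≤ φ x
    intro hyx
    set a := ψ y with ha_def
    have ha : a ∈ Set.Icc (0:ℝ) 1 := hψmem y hy
    have hay : φ a = y := hφψ y hy
    have hax : a ≤ x := by
      by_contra h
      push_neg at h
      have := hφmono hx ha h
      rw [hay] at this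
      linarith
    have hsub : Set.Icc a x ⊆ Set.Icc (0:ℝ) 1 := Set.Icc_subset_Icc ha.1 hx.2
    have key : ∀ s t : ℝ, s ∈ Set.Icc a x → t ∈ Set.Icc a x → s ≤ t →
        |Ghat Γ t - Ghat Γ s| ≤ (t - s) + (Γ t - Γ s) - 2*(C t y - C s y) := by
      intro s t hs ht hst
      have hs1 := hsub hs
      have ht1 := hsub ht
      have hφs := hφmemI s hs1
      have hφt := hφmemI t ht1
      have hys : y ≤ φ s := by
        rw [← hay]; exact hφmono.monotoneOn ha hs1 hs.1
      have hφst : φ s ≤ φ t := hφmono.monotoneOn hs1 ht1 hst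
      have h1 : C t y - C s y ≤ t - s := by
        have r := hC2 s t y 1 hs1 ht1 hy h11 hst hy.2
        have e1 := (hCbd t ht1).2.2.1
        have e2 := (hCbd s hs1).2.2.1
        linarith
      have h2 : C t y - C s y ≤ Γ t - Γ s := by
        have r1 := hC2 s t y (φ s) hs1 ht1 hy hφs hst hys
        have r2 := hC2 0 t (φ s) (φ t) h01 ht1 hφs hφt ht1.1 hφst
        have e1 := (hCbd (φ s) hφs).2.1
        have e2 := (hCbd (φ t) hφt).2.1
        have e3 := hsec s hs1
        have e4 := hsec t ht1
        linarith
      have hG : Ghat Γ t - Ghat Γ s = (t - s) - (Γ t - Γ s) := by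
        simp only [Ghat]; ring
      rw [hG, abs_le]
      constructor <;> linarith
    have chain : ∀ n : ℕ, ∀ u : ℕ → ℝ, Monotone u → (∀ i, u i ∈ Set.Icc a x) →
        ∑ i ∈ Finset.range n, |Ghat Γ (u (i+1)) - Ghat Γ (u i)| ≤
          (u n - u 0) + (Γ (u n) - Γ (u 0)) - 2*(C (u n) y - C (u 0) y) := by
      intro n u hu hui
      induction n with
      | zero => simp
      | succ n ih =>
        rw [Finset.sum_range_succ]
        have hk := key (u n) (u (n+1)) (hui n) (hui (n+1)) (hu (Nat.le_succ n))
        have hub := abs_nonneg (Ghat Γ (u (n+1)) - Ghat Γ (u n))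
        linarith [ih]
    have hCay : C a y = Γ a := by rw [← hay]; exact hsec a ha
    set M : ℝ := (x - a) + (Γ x - Γ a) - 2*(C x y - C a y) with hM_def
    have haa : a ∈ Set.Icc a x := ⟨le_refl a, hax⟩
    have hxx : x ∈ Set.Icc a x := ⟨hax, le_refl x⟩
    have hM0 : 0 ≤ M := le_trans (abs_nonneg _) (key a x haa hxx hax)
    have hvar : eVariationOn (Ghat Γ) (Set.Icc 0 1 ∩ Set.Icc a x) ≤ ENNReal.ofReal M := by
      unfold eVariationOn
      apply iSup_le
      rintro ⟨n, ⟨u, hu, hus⟩⟩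
      show ∑ i ∈ Finset.range n, edist (Ghat Γ (u (i+1))) (Ghat Γ (u i)) ≤ ENNReal.ofReal M
      have hui : ∀ i, u i ∈ Set.Icc a x := fun i => (hus i).2
      calc ∑ i ∈ Finset.range n, edist (Ghat Γ (u (i+1))) (Ghat Γ (u i))
          = ENNReal.ofReal (∑ i ∈ Finset.range n, |Ghat Γ (u (i+1)) - Ghat Γ (u i)|) := by
            rw [ENNReal.ofReal_sum_of_nonneg (fun i _ => abs_nonneg _)]
            exact Finset.sum_congr rfl (fun i _ => by rw [edist_dist, Real.dist_eq])
        _ ≤ ENNReal.ofReal M := by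
            apply ENNReal.ofReal_le_ofReal
            have hch := chain n u hu hui
            have h0 := key a (u 0) haa (hui 0) (hui 0).1
            have hn := key (u n) x (hui n) hxx (hui n).2
            have n1 := abs_nonneg (Ghat Γ (u 0) - Ghat Γ a)
            have n2 := abs_nonneg (Ghat Γ x - Ghat Γ (u n))
            linarith
    have hsV : sV (Ghat Γ) a x ≤ M := by
      rw [sV, variationOnFromTo.eq_of_le _ _ hax]
      exact ENNReal.toReal_le_of_le_ofReal hM0 hvar
    have hGx : Ghat Γ x = x - Γ x := rfl
    have hGa : Ghat Γ a = a - Γ a := rfl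
    linarith
  · -- second case: φ x ≤ y
    intro hyx
    set b := ψ y with hb_def
    have hb : b ∈ Set.Icc (0:ℝ) 1 := hψmem y hy
    have hby : φ b = y := hφψ y hy
    have hxb : x ≤ b := by
      by_contra h
      push_neg at h
      have := hφmono hb hx h
      rw [hby] at this
      linarith
    have hsub : Set.Icc x b ⊆ Set.Icc (0:ℝ) 1 := Set.Icc_subset_Icc hx.1 hb.2
    have key : ∀ s t : ℝ, s ∈ Set.Icc x b → t ∈ Set.Icc x b → s ≤ t →
        |Gtil φ Γ t - Gtil φ Γ s| ≤ (φ t - φ s) + (Γ t - Γ s) - 2*(C x (φ t) - C x (φ s)) := by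
      intro s t hs ht hst
      have hs1 := hsub hs
      have ht1 := hsub ht
      have hφs := hφmemI s hs1
      have hφt := hφmemI t ht1
      have hφst : φ s ≤ φ t := hφmono.monotoneOn hs1 ht1 hst
      have h1 : C x (φ t) - C x (φ s) ≤ φ t - φ s := by
        have r := hC2 x 1 (φ s) (φ t) hx h11 hφs hφt hx.2 hφst
        have e1 := (hCbd (φ t) hφt).2.2.2
        have e2 := (hCbd (φ s) hφs).2.2.2
        linarith
      have h2 : C x (φ t) - C x (φ s) ≤ Γ t - Γ s := by
        have r1 := hC2 x s (φ s) (φ t) hx hs1 hφs hφt hs.1 hφst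
        have r2 := hC2 s t 0 (φ t) hs1 ht1 h01 hφt hst hφt.1
        have e1 := (hCbd t ht1).1
        have e2 := (hCbd s hs1).1
        have e3 := hsec s hs1
        have e4 := hsec t ht1
        linarith
      have hG : Gtil φ Γ t - Gtil φ Γ s = (φ t - φ s) - (Γ t - Γ s) := by
        simp only [Gtil]; ring
      rw [hG, abs_le]
      constructor <;> linarith
    have chain : ∀ n : ℕ, ∀ u : ℕ → ℝ, Monotone u → (∀ i, u i ∈ Set.Icc x b) →
        ∑ i ∈ Finset.range n, |Gtil φ Γ (u (i+1)) - Gtil φ Γ (u i)| ≤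
          (φ (u n) - φ (u 0)) + (Γ (u n) - Γ (u 0)) - 2*(C x (φ (u n)) - C x (φ (u 0))) := by
      intro n u hu hui
      induction n with
      | zero => simp
      | succ n ih =>
        rw [Finset.sum_range_succ]
        have hk := key (u n) (u (n+1)) (hui n) (hui (n+1)) (hu (Nat.le_succ n))
        have hub := abs_nonneg (Gtil φ Γ (u (n+1)) - Gtil φ Γ (u n))
        linarith [ih]
    have hCxx : C x (φ x) = Γ x := hsec x hx
    have hCxb : C x (φ b) = C x y := by rw [hby]
    set M : ℝ := (φ b - φ x) + (Γ b - Γ x) - 2*(C x (φ b) - C x (φ x)) with hM_def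
    have hxx : x ∈ Set.Icc x b := ⟨le_refl x, hxb⟩
    have hbb : b ∈ Set.Icc x b := ⟨hxb, le_refl b⟩
    have hM0 : 0 ≤ M := le_trans (abs_nonneg _) (key x b hxx hbb hxb)
    have hvar : eVariationOn (Gtil φ Γ) (Set.Icc 0 1 ∩ Set.Icc x b) ≤ ENNReal.ofReal M := by
      unfold eVariationOn
      apply iSup_le
      rintro ⟨n, ⟨u, hu, hus⟩⟩
      show ∑ i ∈ Finset.range n, edist (Gtil φ Γ (u (i+1))) (Gtil φ Γ (u i)) ≤ ENNReal.ofReal M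
      have hui : ∀ i, u i ∈ Set.Icc x b := fun i => (hus i).2
      calc ∑ i ∈ Finset.range n, edist (Gtil φ Γ (u (i+1))) (Gtil φ Γ (u i))
          = ENNReal.ofReal (∑ i ∈ Finset.range n, |Gtil φ Γ (u (i+1)) - Gtil φ Γ (u i)|) := by
            rw [ENNReal.ofReal_sum_of_nonneg (fun i _ => abs_nonneg _)]
            exact Finset.sum_congr rfl (fun i _ => by rw [edist_dist, Real.dist_eq])
        _ ≤ ENNReal.ofReal M := by
            apply ENNReal.ofReal_le_ofReal
            have hch := chain n u hu hui
            have h0 := key x (u 0) hxx (hui 0) (hui 0).1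
            have hn := key (u n) b (hui n) hbb (hui n).2
            have n1 := abs_nonneg (Gtil φ Γ (u 0) - Gtil φ Γ x)
            have n2 := abs_nonneg (Gtil φ Γ b - Gtil φ Γ (u n))
            linarith
    have hsV : sV (Gtil φ Γ) x b ≤ M := by
      rw [sV, variationOnFromTo.eq_of_le _ _ hxb]
      exact ENNReal.toReal_le_of_le_ofReal hM0 hvar
    have hGx : Gtil φ Γ x = φ x - Γ x := rfl
    have hGb : Gtil φ Γ b = φ b - Γ b := rfl
    linarith
end

section
/- Let 0 ≤ x₁ < x₂ ≤ 1. (i) If V_{x₁}^{x₂}(Γ̂) ≥ Γ̂(x₁) + Γ̂(x₂), then V_{x₁}^{x}(Γ̂) ≥ Γ̂(x₁) + Γ̂(x) for every x ∈ [x₂, 1]. (ii) If V_{x₁}^{x₂}(Γ̃) ≥ Γ̃(x₁) + Γ̃(x₂), then V_{x₁}^{x}(Γ̃) ≥ Γ̃(x₁) + Γ̃(x) for every x ∈ [x₂, 1]. -/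
/-!
`Γ̂` and `Γ̃` are differences of monotone functions on `[0, 1]`, hence of locally bounded
variation, and for such an `f` the excess `V_{x₁}^x(f) - f(x)` is monotone in `x`
(because `f(x) - f(x₂) ≤ V_{x₂}^x(f)`). So once it reaches `f(x₁)` at `x₂` it stays there.
-/

open Set MeasureTheory

theorem LocallyBoundedVariationOn.sub {α E : Type*} [LinearOrder α] [SeminormedAddCommGroup E]
    {f g : α → E} {s : Set α} (hf : LocallyBoundedVariationOn f s)
    (hg : LocallyBoundedVariationOn g s) : LocallyBoundedVariationOn (f - g) s :=
  fun a b ha hb => ne_top_of_le_ne_top (ENNReal.add_ne_top.2 ⟨hf a b ha hb, hg a b ha hb⟩)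
    (eVariationOn_sub_le f g _)

theorem add_le_variationOnFromTo_of_le {α : Type*} [LinearOrder α] {f : α → ℝ} {s : Set α}
    (hf : LocallyBoundedVariationOn f s) {a b c : α} (ha : a ∈ s) (hb : b ∈ s) (hc : c ∈ s)
    (hbc : b ≤ c) (h : f a + f b ≤ variationOnFromTo f s a b) :
    f a + f c ≤ variationOnFromTo f s a c := by
  have hexcess := variationOnFromTo.sub_self_monotoneOn hf ha hb hc hbc
  simp only [Pi.sub_apply] at hexcess
  linarith

theorem stmt_12_general
    (φ Γ : ℝ → ℝ)
    (hφmono : StrictMonoOn φ (Set.Icc 0 1))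
    (hΓlip : ∀ t₁ t₂ : ℝ, t₁ ∈ Set.Icc (0:ℝ) 1 → t₂ ∈ Set.Icc (0:ℝ) 1 → t₁ ≤ t₂ →
      0 ≤ Γ t₂ - Γ t₁ ∧ Γ t₂ - Γ t₁ ≤ (t₂ - t₁) + (φ t₂ - φ t₁))
    (x₁ x₂ : ℝ) (hx₁ : x₁ ∈ Set.Icc (0:ℝ) 1) (hx₂ : x₂ ∈ Set.Icc (0:ℝ) 1) :
    (sV (Ghat Γ) x₁ x₂ ≥ Ghat Γ x₁ + Ghat Γ x₂ →
      ∀ x ∈ Set.Icc x₂ 1, sV (Ghat Γ) x₁ x ≥ Ghat Γ x₁ + Ghat Γ x) ∧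
    (sV (Gtil φ Γ) x₁ x₂ ≥ Gtil φ Γ x₁ + Gtil φ Γ x₂ →
      ∀ x ∈ Set.Icc x₂ 1, sV (Gtil φ Γ) x₁ x ≥ Gtil φ Γ x₁ + Gtil φ Γ x) := by
  have hΓ : LocallyBoundedVariationOn Γ (Icc 0 1) :=
    MonotoneOn.locallyBoundedVariationOn fun a ha b hb hab => by
      linarith [(hΓlip a b ha hb hab).1]
  have hGhat : LocallyBoundedVariationOn (Ghat Γ) (Icc 0 1) :=
    monotoneOn_id.locallyBoundedVariationOn.sub hΓ
  have hGtil : LocallyBoundedVariationOn (Gtil φ Γ) (Icc 0 1) :=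
    hφmono.monotoneOn.locallyBoundedVariationOn.sub hΓ
  have hIcc : ∀ x ∈ Icc x₂ 1, x ∈ Icc (0:ℝ) 1 := fun x hx => ⟨hx₂.1.trans hx.1, hx.2⟩
  exact ⟨fun h x hx => add_le_variationOnFromTo_of_le hGhat hx₁ hx₂ (hIcc x hx) hx.1 h,
    fun h x hx => add_le_variationOnFromTo_of_le hGtil hx₁ hx₂ (hIcc x hx) hx.1 h⟩

theorem stmt_12
    (φ Γ : ℝ → ℝ)
    (hφcont : ContinuousOn φ (Set.Icc 0 1))
    (hφmono : StrictMonoOn φ (Set.Icc 0 1))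
    (hφ0 : φ 0 = 0) (hφ1 : φ 1 = 1)
    (hΓrange : ∀ t ∈ Set.Icc (0:ℝ) 1, max 0 (t + φ t - 1) ≤ Γ t ∧ Γ t ≤ min t (φ t))
    (hΓlip : ∀ t₁ t₂ : ℝ, t₁ ∈ Set.Icc (0:ℝ) 1 → t₂ ∈ Set.Icc (0:ℝ) 1 → t₁ ≤ t₂ →
      0 ≤ Γ t₂ - Γ t₁ ∧ Γ t₂ - Γ t₁ ≤ (t₂ - t₁) + (φ t₂ - φ t₁))
    (x₁ x₂ : ℝ) (hx₁ : x₁ ∈ Set.Icc (0:ℝ) 1) (hx₂ : x₂ ∈ Set.Icc (0:ℝ) 1) (hlt : x₁ < x₂) :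
    (sV (Ghat Γ) x₁ x₂ ≥ Ghat Γ x₁ + Ghat Γ x₂ →
      ∀ x ∈ Set.Icc x₂ 1, sV (Ghat Γ) x₁ x ≥ Ghat Γ x₁ + Ghat Γ x) ∧
    (sV (Gtil φ Γ) x₁ x₂ ≥ Gtil φ Γ x₁ + Gtil φ Γ x₂ →
      ∀ x ∈ Set.Icc x₂ 1, sV (Gtil φ Γ) x₁ x ≥ Gtil φ Γ x₁ + Gtil φ Γ x) :=
  stmt_12_general φ Γ hφmono hΓlip x₁ x₂ hx₁ hx₂
end

section
/- Suppose the φ-splice C₂ ▵_φ C₁ is a copula, and suppose that for some x₁, x₂ ∈ [0,1] with x₁ < x₂ one has Γ(x₁) + Γ(x₂) ≥ x₁ + φ(x₁). Then at least one of the following holds: V_{x₁}^{x₂}(Γ̂) ≥ Γ̂(x₁) + Γ̂(x₂), or V_{x₁}^{x₂}(Γ̃) ≥ Γ̃(x₁) + Γ̃(x₂). -/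
open Set MeasureTheory

/-! If both inequalities failed, `Γ̂` and `Γ̃` would be bounded below by some `ε > 0` on
`[x₁, x₂]`, since a function of locally bounded variation satisfies `f a + f b - V_a^b(f) ≤ 2 f(z)`
for `a ≤ z ≤ b`. On a short interval `[a, b] ⊆ [x₁, x₂]` the Lipschitz bound on `Γ` then gives
`Γ(b) ≤ min(a, φ(a))`, so the splice is explicit at the four corners of `[a, b] × [φ(a), φ(b)]`
and its 2-increasingness reads `(b - a) + (φ(b) - φ(a)) ≤ V_a^b(Γ̂) + V_a^b(Γ̃)`. Adding this up
along a fine partition gives the same inequality on `[x₁, x₂]`, which together with the two failed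
inequalities contradicts `Γ(x₁) + Γ(x₂) ≥ x₁ + φ(x₁)`. -/

theorem le_of_forall_sub_lt_le {h : ℝ → ℝ} {a b δ : ℝ} (hδ : 0 < δ) (hab : a ≤ b)
    (hloc : ∀ s ∈ Icc a b, ∀ t ∈ Icc a b, s < t → t - s < δ → h s ≤ h t) : h a ≤ h b := by
  have hstep : ∀ n : ℕ, ∀ t ∈ Icc a b, t ≤ a + n * (δ / 2) → h a ≤ h t := by
    intro n
    induction n with
    | zero => intro t ht hta; rw [le_antisymm (by simpa using hta) ht.1]
    | succ n ih =>
      intro t ht hta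
      by_cases hnear : t ≤ a + n * (δ / 2)
      · exact ih t ht hnear
      set s := a + n * (δ / 2) with hs_def
      have hs : s ∈ Icc a b := ⟨le_add_of_nonneg_right (by positivity), by linarith [ht.2]⟩
      push_cast at hta
      exact (ih s hs le_rfl).trans (hloc s hs t ht (by linarith) (by rw [hs_def]; linarith))
  obtain ⟨n, hn⟩ := exists_nat_ge ((b - a) / (δ / 2))
  refine hstep n b ⟨hab, le_rfl⟩ ?_
  rw [div_le_iff₀ (by positivity)] at hn
  linarith

section Variation

variable {α : Type*} [LinearOrder α] {f g : α → ℝ} {s : Set α}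

theorem eVariationOn_le_of_abs_sub_le
    (h : ∀ a ∈ s, ∀ b ∈ s, a ≤ b → |f b - f a| ≤ g b - g a) :
    eVariationOn f s ≤ eVariationOn g s := by
  refine iSup_le fun ⟨n, u, hu, us⟩ => ?_
  calc ∑ i ∈ Finset.range n, edist (f (u (i + 1))) (f (u i))
      ≤ ∑ i ∈ Finset.range n, edist (g (u (i + 1))) (g (u i)) := by
        refine Finset.sum_le_sum fun i _ => ?_
        rw [edist_dist, edist_dist, Real.dist_eq, Real.dist_eq]
        exact ENNReal.ofReal_le_ofReal
          ((h _ (us i) _ (us (i + 1)) (hu (Nat.le_succ i))).trans (le_abs_self _))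
    _ ≤ eVariationOn g s := eVariationOn.sum_le hu us

theorem locallyBoundedVariationOn_of_abs_sub_le (hg : MonotoneOn g s)
    (h : ∀ a ∈ s, ∀ b ∈ s, a ≤ b → |f b - f a| ≤ g b - g a) :
    LocallyBoundedVariationOn f s := fun a b as bs =>
  ne_top_of_le_ne_top (hg.locallyBoundedVariationOn a b as bs)
    (eVariationOn_le_of_abs_sub_le fun x hx y hy hxy => h x hx.1 y hy.1 hxy)

theorem abs_sub_le_variationOnFromTo (hf : LocallyBoundedVariationOn f s) {a b : α}
    (as : a ∈ s) (bs : b ∈ s) (hab : a ≤ b) : |f b - f a| ≤ variationOnFromTo f s a b := by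
  simpa [variationOnFromTo.self] using variationOnFromTo.abs_sub_le_sub_of_le hf as as bs hab

theorem add_sub_variationOnFromTo_le_two_mul (hf : LocallyBoundedVariationOn f s)
    {a b z : α} (as : a ∈ s) (bs : b ∈ s) (zs : z ∈ s) (haz : a ≤ z) (hzb : z ≤ b) :
    f a + f b - variationOnFromTo f s a b ≤ 2 * f z := by
  have hleft := variationOnFromTo.add_self_monotoneOn hf as as zs haz
  have hright := variationOnFromTo.sub_self_monotoneOn hf as zs bs hzb
  simp only [Pi.add_apply, Pi.sub_apply, variationOnFromTo.self] at hleft hright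
  linarith

end Variation

section Splice

variable {φ ψ Γ : ℝ → ℝ}

theorem locallyBoundedVariationOn_Ghat (hφ : MonotoneOn φ (Icc 0 1))
    (hΓlip : ∀ t₁ t₂ : ℝ, t₁ ∈ Icc (0:ℝ) 1 → t₂ ∈ Icc (0:ℝ) 1 → t₁ ≤ t₂ →
      0 ≤ Γ t₂ - Γ t₁ ∧ Γ t₂ - Γ t₁ ≤ (t₂ - t₁) + (φ t₂ - φ t₁)) :
    LocallyBoundedVariationOn (Ghat Γ) (Icc 0 1) := by
  refine locallyBoundedVariationOn_of_abs_sub_le (g := fun t => t + φ t)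
    (fun a ha b hb hab => add_le_add hab (hφ ha hb hab)) fun a ha b hb hab => ?_
  have := hΓlip a b ha hb hab
  have := hφ ha hb hab
  rw [abs_le]
  constructor <;> simp only [Ghat] <;> linarith

theorem locallyBoundedVariationOn_Gtil (hφ : MonotoneOn φ (Icc 0 1))
    (hΓlip : ∀ t₁ t₂ : ℝ, t₁ ∈ Icc (0:ℝ) 1 → t₂ ∈ Icc (0:ℝ) 1 → t₁ ≤ t₂ →
      0 ≤ Γ t₂ - Γ t₁ ∧ Γ t₂ - Γ t₁ ≤ (t₂ - t₁) + (φ t₂ - φ t₁)) :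
    LocallyBoundedVariationOn (Gtil φ Γ) (Icc 0 1) := by
  refine locallyBoundedVariationOn_of_abs_sub_le (g := fun t => t + φ t)
    (fun a ha b hb hab => add_le_add hab (hφ ha hb hab)) fun a ha b hb hab => ?_
  have := hΓlip a b ha hb hab
  have := hφ ha hb hab
  rw [abs_le]
  constructor <;> simp only [Gtil] <;> linarith

theorem splice_apply_diag {t : ℝ} (hψ : ψ (φ t) = t) (hΓ : Γ t ≤ min t (φ t)) :
    splice φ ψ Γ t (φ t) = Γ t := by
  have hf1 : f1 ψ Γ t (φ t) = Γ t := by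
    simp only [f1, hψ, sV, variationOnFromTo.self, Ghat]
    ring
  rw [splice, if_pos le_rfl, C1, hf1, min_eq_right (le_min_iff.mp hΓ).2,
    min_eq_right (le_min_iff.mp hΓ).1]

theorem splice_apply_below {a b : ℝ} (hψ : ψ (φ a) = a) (hφ : φ a ≤ φ b)
    (hV : Ghat Γ b - Ghat Γ a ≤ sV (Ghat Γ) a b) (hb : Γ b ≤ b) (hba : Γ b ≤ φ a) :
    splice φ ψ Γ b (φ a) = b - (sV (Ghat Γ) a b + Ghat Γ b + Ghat Γ a) / 2 := by
  have hf1 : f1 ψ Γ b (φ a) = b - (sV (Ghat Γ) a b + Ghat Γ b + Ghat Γ a) / 2 := by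
    rw [f1, hψ]; ring
  have hf1Γ : f1 ψ Γ b (φ a) ≤ Γ b := by
    simp only [hf1, Ghat] at hV ⊢; linarith
  rw [splice, if_pos hφ, C1, min_eq_right (hf1Γ.trans hba), min_eq_right (hf1Γ.trans hb), hf1]

theorem splice_apply_above {a b : ℝ} (hψ : ψ (φ b) = b) (hφ : φ a < φ b)
    (hV : Gtil φ Γ b - Gtil φ Γ a ≤ sV (Gtil φ Γ) a b) (hb : Γ b ≤ φ b) (hba : Γ b ≤ a) :
    splice φ ψ Γ a (φ b) = φ b - (sV (Gtil φ Γ) a b + Gtil φ Γ a + Gtil φ Γ b) / 2 := by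
  have hf2 : f2 φ ψ Γ a (φ b) = φ b - (sV (Gtil φ Γ) a b + Gtil φ Γ a + Gtil φ Γ b) / 2 := by
    rw [f2, hψ]; ring
  have hf2Γ : f2 φ ψ Γ a (φ b) ≤ Γ b := by
    simp only [hf2, Gtil] at hV ⊢; linarith
  rw [splice, if_neg hφ.not_ge, C2, min_eq_right (hf2Γ.trans hb), min_eq_right (hf2Γ.trans hba),
    hf2]

theorem IsCopula.sub_add_sub_le_sV_add_sV_of_le_min (hcop : IsCopula (splice φ ψ Γ))
    (hφ : StrictMonoOn φ (Icc 0 1)) (hφI : MapsTo φ (Icc 0 1) (Icc 0 1))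
    (hψφ : ∀ t ∈ Icc (0:ℝ) 1, ψ (φ t) = t) (hΓ : ∀ t ∈ Icc (0:ℝ) 1, Γ t ≤ min t (φ t))
    (hLhat : LocallyBoundedVariationOn (Ghat Γ) (Icc 0 1))
    (hLtil : LocallyBoundedVariationOn (Gtil φ Γ) (Icc 0 1))
    {a b : ℝ} (ha : a ∈ Icc (0:ℝ) 1) (hb : b ∈ Icc (0:ℝ) 1) (hab : a < b)
    (hΓb : Γ b ≤ min a (φ a)) :
    (b - a) + (φ b - φ a) ≤ sV (Ghat Γ) a b + sV (Gtil φ Γ) a b := by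
  have hφab : φ a < φ b := hφ ha hb hab
  have hVhat : Ghat Γ b - Ghat Γ a ≤ sV (Ghat Γ) a b :=
    (le_abs_self _).trans (abs_sub_le_variationOnFromTo hLhat ha hb hab.le)
  have hVtil : Gtil φ Γ b - Gtil φ Γ a ≤ sV (Gtil φ Γ) a b :=
    (le_abs_self _).trans (abs_sub_le_variationOnFromTo hLtil ha hb hab.le)
  have hrect := hcop.2.2 a b (φ a) (φ b) ha hb (hφI ha) (hφI hb) hab.le hφab.le
  obtain ⟨hΓb_b, hΓb_φb⟩ := le_min_iff.mp (hΓ b hb)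
  obtain ⟨hΓb_a, hΓb_φa⟩ := le_min_iff.mp hΓb
  rw [splice_apply_diag (hψφ a ha) (hΓ a ha), splice_apply_diag (hψφ b hb) (hΓ b hb),
    splice_apply_below (hψφ a ha) hφab.le hVhat hΓb_b hΓb_φa,
    splice_apply_above (hψφ b hb) hφab hVtil hΓb_φb hΓb_a] at hrect
  simp only [Ghat, Gtil] at hrect
  linarith

theorem IsCopula.sub_add_sub_le_sV_add_sV (hcop : IsCopula (splice φ ψ Γ))
    (hφc : ContinuousOn φ (Icc 0 1)) (hφ : StrictMonoOn φ (Icc 0 1))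
    (hφI : MapsTo φ (Icc 0 1) (Icc 0 1))
    (hψφ : ∀ t ∈ Icc (0:ℝ) 1, ψ (φ t) = t) (hΓ : ∀ t ∈ Icc (0:ℝ) 1, Γ t ≤ min t (φ t))
    (hΓlip : ∀ t₁ t₂ : ℝ, t₁ ∈ Icc (0:ℝ) 1 → t₂ ∈ Icc (0:ℝ) 1 → t₁ ≤ t₂ →
      0 ≤ Γ t₂ - Γ t₁ ∧ Γ t₂ - Γ t₁ ≤ (t₂ - t₁) + (φ t₂ - φ t₁))
    {x₁ x₂ ε : ℝ} (hx₁ : x₁ ∈ Icc (0:ℝ) 1) (hx₂ : x₂ ∈ Icc (0:ℝ) 1) (hle : x₁ ≤ x₂)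
    (hε : 0 < ε) (hεhat : ∀ z ∈ Icc x₁ x₂, ε ≤ Ghat Γ z)
    (hεtil : ∀ z ∈ Icc x₁ x₂, ε ≤ Gtil φ Γ z) :
    (x₂ - x₁) + (φ x₂ - φ x₁) ≤ sV (Ghat Γ) x₁ x₂ + sV (Gtil φ Γ) x₁ x₂ := by
  have hLhat := locallyBoundedVariationOn_Ghat hφ.monotoneOn hΓlip
  have hLtil := locallyBoundedVariationOn_Gtil hφ.monotoneOn hΓlip
  have hsub : Icc x₁ x₂ ⊆ Icc 0 1 := Icc_subset_Icc hx₁.1 hx₂.2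
  obtain ⟨δ, hδ, hφδ⟩ := Metric.uniformContinuousOn_iff.mp
    (isCompact_Icc.uniformContinuousOn_of_continuous hφc) (ε / 2) (by positivity)
  suffices hmono : sV (Ghat Γ) x₁ x₁ + sV (Gtil φ Γ) x₁ x₁ - (x₁ + φ x₁) ≤
      sV (Ghat Γ) x₁ x₂ + sV (Gtil φ Γ) x₁ x₂ - (x₂ + φ x₂) by
    simp only [sV, variationOnFromTo.self] at hmono ⊢
    linarith
  refine le_of_forall_sub_lt_le (h := fun t => sV (Ghat Γ) x₁ t + sV (Gtil φ Γ) x₁ t - (t + φ t))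
    (lt_min hδ (half_pos hε)) hle fun a ha b hb hab hδab => ?_
  have hφab : φ b - φ a < ε / 2 :=
    (le_abs_self _).trans_lt (hφδ b (hsub hb) a (hsub ha)
      (by rw [Real.dist_eq, abs_of_pos (sub_pos.mpr hab)]; exact hδab.trans_le (min_le_left _ _)))
  have hmesh : (b - a) + (φ b - φ a) < ε := by linarith [min_le_right δ (ε / 2)]
  have hΓab := (hΓlip a b (hsub ha) (hsub hb) hab.le).2
  have hhat := hεhat a ha
  have htil := hεtil a ha
  simp only [Ghat, Gtil] at hhat htil
  have hloc := hcop.sub_add_sub_le_sV_add_sV_of_le_min hφ hφI hψφ hΓ hLhat hLtil (hsub ha)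
    (hsub hb) hab (le_min (by linarith) (by linarith))
  have hadd_hat := variationOnFromTo.add hLhat hx₁ (hsub ha) (hsub hb)
  have hadd_til := variationOnFromTo.add hLtil hx₁ (hsub ha) (hsub hb)
  simp only [sV] at hloc ⊢
  linarith

end Splice

theorem stmt_13_general
    (φ Γ : ℝ → ℝ)
    (hφcont : ContinuousOn φ (Set.Icc 0 1))
    (hφmono : StrictMonoOn φ (Set.Icc 0 1))
    (hφ0 : φ 0 = 0) (hφ1 : φ 1 = 1)
    (hΓrange : ∀ t ∈ Set.Icc (0:ℝ) 1, max 0 (t + φ t - 1) ≤ Γ t ∧ Γ t ≤ min t (φ t))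
    (hΓlip : ∀ t₁ t₂ : ℝ, t₁ ∈ Set.Icc (0:ℝ) 1 → t₂ ∈ Set.Icc (0:ℝ) 1 → t₁ ≤ t₂ →
      0 ≤ Γ t₂ - Γ t₁ ∧ Γ t₂ - Γ t₁ ≤ (t₂ - t₁) + (φ t₂ - φ t₁))
    (ψ : ℝ → ℝ)
    (hψφ : ∀ t ∈ Set.Icc (0:ℝ) 1, ψ (φ t) = t)
    (hcop : IsCopula (splice φ ψ Γ))
    (x₁ x₂ : ℝ) (hx₁ : x₁ ∈ Set.Icc (0:ℝ) 1) (hx₂ : x₂ ∈ Set.Icc (0:ℝ) 1) (hlt : x₁ < x₂)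
    (hsum : Γ x₁ + Γ x₂ ≥ x₁ + φ x₁) :
    sV (Ghat Γ) x₁ x₂ ≥ Ghat Γ x₁ + Ghat Γ x₂ ∨
    sV (Gtil φ Γ) x₁ x₂ ≥ Gtil φ Γ x₁ + Gtil φ Γ x₂ := by
  by_contra! hV
  have hφI : MapsTo φ (Icc 0 1) (Icc 0 1) := by
    simpa [hφ0, hφ1] using hφmono.monotoneOn.mapsTo_Icc
  have hsub : Icc x₁ x₂ ⊆ Icc 0 1 := Icc_subset_Icc hx₁.1 hx₂.2
  have hLhat := locallyBoundedVariationOn_Ghat hφmono.monotoneOn hΓlip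
  have hLtil := locallyBoundedVariationOn_Gtil hφmono.monotoneOn hΓlip
  set dhat := Ghat Γ x₁ + Ghat Γ x₂ - sV (Ghat Γ) x₁ x₂
  set dtil := Gtil φ Γ x₁ + Gtil φ Γ x₂ - sV (Gtil φ Γ) x₁ x₂
  have hεhat : ∀ z ∈ Icc x₁ x₂, min dhat dtil / 2 ≤ Ghat Γ z := fun z hz => by
    have : dhat ≤ 2 * Ghat Γ z :=
      add_sub_variationOnFromTo_le_two_mul hLhat hx₁ hx₂ (hsub hz) hz.1 hz.2
    linarith [min_le_left dhat dtil]
  have hεtil : ∀ z ∈ Icc x₁ x₂, min dhat dtil / 2 ≤ Gtil φ Γ z := fun z hz => by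
    have : dtil ≤ 2 * Gtil φ Γ z :=
      add_sub_variationOnFromTo_le_two_mul hLtil hx₁ hx₂ (hsub hz) hz.1 hz.2
    linarith [min_le_right dhat dtil]
  have hε : 0 < min dhat dtil / 2 := half_pos (lt_min (by linarith) (by linarith))
  have := hcop.sub_add_sub_le_sV_add_sV hφcont hφmono hφI hψφ (fun t ht => (hΓrange t ht).2)
    hΓlip hx₁ hx₂ hlt.le hε hεhat hεtil
  simp only [Ghat, Gtil] at hV
  linarith

theorem stmt_13
    (φ Γ : ℝ → ℝ)
    (hφcont : ContinuousOn φ (Set.Icc 0 1))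
    (hφmono : StrictMonoOn φ (Set.Icc 0 1))
    (hφ0 : φ 0 = 0) (hφ1 : φ 1 = 1)
    (hΓrange : ∀ t ∈ Set.Icc (0:ℝ) 1, max 0 (t + φ t - 1) ≤ Γ t ∧ Γ t ≤ min t (φ t))
    (hΓlip : ∀ t₁ t₂ : ℝ, t₁ ∈ Set.Icc (0:ℝ) 1 → t₂ ∈ Set.Icc (0:ℝ) 1 → t₁ ≤ t₂ →
      0 ≤ Γ t₂ - Γ t₁ ∧ Γ t₂ - Γ t₁ ≤ (t₂ - t₁) + (φ t₂ - φ t₁))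
    (ψ : ℝ → ℝ)
    (hψmem : ∀ y ∈ Set.Icc (0:ℝ) 1, ψ y ∈ Set.Icc (0:ℝ) 1)
    (hψφ : ∀ t ∈ Set.Icc (0:ℝ) 1, ψ (φ t) = t)
    (hφψ : ∀ y ∈ Set.Icc (0:ℝ) 1, φ (ψ y) = y)
    (hcop : IsCopula (splice φ ψ Γ))
    (x₁ x₂ : ℝ) (hx₁ : x₁ ∈ Set.Icc (0:ℝ) 1) (hx₂ : x₂ ∈ Set.Icc (0:ℝ) 1) (hlt : x₁ < x₂)
    (hsum : Γ x₁ + Γ x₂ ≥ x₁ + φ x₁) :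
    sV (Ghat Γ) x₁ x₂ ≥ Ghat Γ x₁ + Ghat Γ x₂ ∨
    sV (Gtil φ Γ) x₁ x₂ ≥ Gtil φ Γ x₁ + Gtil φ Γ x₂ :=
  stmt_13_general φ Γ hφcont hφmono hφ0 hφ1 hΓrange hΓlip ψ hψφ hcop x₁ x₂ hx₁ hx₂ hlt hsum
end
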